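/- arXiv:2008.04188 — 11 statements merged into one kernel-verified Lean document; each statement's English description precedes it below -/
import Mathlib

section
/- Let W : GL⁺(2) → ℝ be a volumetric-isochorically split energy, W(F) = h(λ₁(F)/λ₂(F)) + f(λ₁(F)·λ₂(F)) with h, f ∈ C²((0,∞);ℝ) and h(t) = h(1/t) for all t > 0. If W is rank-one convex, then b(t) + c(t) = (t² + 4t + 3)·h'(t) + 2t·(t+1)²·h''(t) ≥ 0 for all t > 0. -/
open Real Set Matrix

/-- Squared Frobenius norm of a 2×2 real matrix, i.e. `trace (Fᵀ * F)`. -/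
noncomputable def frobSq (F : Matrix (Fin 2) (Fin 2) ℝ) : ℝ := ∑ i, ∑ j, (F i j) ^ 2

/-- The larger singular value of a 2×2 real matrix: the square root of the larger
eigenvalue of `Fᵀ * F`. -/
noncomputable def sv1 (F : Matrix (Fin 2) (Fin 2) ℝ) : ℝ :=
  Real.sqrt ((frobSq F + Real.sqrt ((frobSq F) ^ 2 - 4 * (F.det) ^ 2)) / 2)

/-- The smaller singular value of a 2×2 real matrix. -/
noncomputable def sv2 (F : Matrix (Fin 2) (Fin 2) ℝ) : ℝ :=
  Real.sqrt ((frobSq F - Real.sqrt ((frobSq F) ^ 2 - 4 * (F.det) ^ 2)) / 2)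

/-- Rank-one convexity of an energy defined on GL⁺(2): for every `F` with
`det F > 0` and all vectors `ξ, η`, the map `t ↦ W (F + t ξ ηᵀ)` is convex on
the (convex, open) set of parameters `t` where the determinant stays positive. -/
def RankOneConvex (W : Matrix (Fin 2) (Fin 2) ℝ → ℝ) : Prop :=
  ∀ F : Matrix (Fin 2) (Fin 2) ℝ, 0 < F.det → ∀ ξ η : Fin 2 → ℝ,
    ConvexOn ℝ {t : ℝ | 0 < (F + t • Matrix.vecMulVec ξ η).det}
      (fun t : ℝ => W (F + t • Matrix.vecMulVec ξ η))

/-- `a(t) = t²(t²−1)h'(t)h''(t) − 2t h'(t)²`. -/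
noncomputable def aFun (h : ℝ → ℝ) (t : ℝ) : ℝ :=
  t ^ 2 * (t ^ 2 - 1) * deriv h t * deriv (deriv h) t - 2 * t * (deriv h t) ^ 2

/-- `b(t) = (t²+3)h'(t) + 2t(t²+1)h''(t)`. -/
noncomputable def bFun (h : ℝ → ℝ) (t : ℝ) : ℝ :=
  (t ^ 2 + 3) * deriv h t + 2 * t * (t ^ 2 + 1) * deriv (deriv h) t

/-- `c(t) = 4t(h'(t) + t h''(t))`. -/
noncomputable def cFun (h : ℝ → ℝ) (t : ℝ) : ℝ :=
  4 * t * (deriv h t + t * deriv (deriv h) t)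

/-! ### Auxiliary material for the proof -/

/-- `√(s²+4)`. -/
noncomputable def qrt (s : ℝ) : ℝ := Real.sqrt (s^2 + 4)

/-- The singular value ratio along the shear line, as a smooth function of the shear
parameter: `ρ(s) = (2 + s² + s√(s²+4))/2`. -/
noncomputable def rho (s : ℝ) : ℝ := (2 + s^2 + s * qrt s) / 2

/-- First derivative of `rho`. -/
noncomputable def rho' (s : ℝ) : ℝ := s + (s^2 + 2) / qrt s

/-- Second derivative of `rho`. -/
noncomputable def rho'' (s : ℝ) : ℝ := 1 + s * (s^2 + 6) / (qrt s)^3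

lemma qrt_pos (s : ℝ) : 0 < qrt s := Real.sqrt_pos.2 (by positivity)

lemma qrt_sq (s : ℝ) : (qrt s)^2 = s^2 + 4 := Real.sq_sqrt (by positivity)

lemma rho_pos (s : ℝ) : 0 < rho s := by
  have h1 := qrt_pos s
  have h2 := qrt_sq s
  unfold rho
  nlinarith [sq_nonneg (s + qrt s), sq_nonneg (s * qrt s + s^2 + 2)]

lemma hasDerivAt_qrt (s : ℝ) : HasDerivAt qrt (s / qrt s) s := by
  have h1 : HasDerivAt (fun x : ℝ => x^2 + 4) (2*s) s := by
    simpa using ((hasDerivAt_pow 2 s).add_const 4)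
  have h2 := (Real.hasDerivAt_sqrt (x := s^2+4) (by positivity)).comp s h1
  refine h2.congr_deriv ?_
  unfold qrt
  field_simp

lemma hasDerivAt_rho (s : ℝ) : HasDerivAt rho (rho' s) s := by
  have h1 : HasDerivAt (fun x : ℝ => 2 + x^2 + x * qrt x)
      (2*s + (1 * qrt s + s * (s / qrt s))) s := by
    have hp : HasDerivAt (fun x : ℝ => x * qrt x) (1 * qrt s + s * (s / qrt s)) s :=
      (hasDerivAt_id s).mul (hasDerivAt_qrt s)
    exact (((hasDerivAt_pow 2 s).const_add 2).add hp).congr_deriv (by norm_num)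
  have := h1.div_const 2
  refine this.congr_deriv ?_
  have hq := qrt_pos s
  have h2 := qrt_sq s
  unfold rho'
  field_simp
  nlinarith [h2]

lemma hasDerivAt_rho' (s : ℝ) : HasDerivAt rho' (rho'' s) s := by
  have hq := qrt_pos s
  have h2 := qrt_sq s
  have hd : HasDerivAt (fun x : ℝ => x + (x^2 + 2) / qrt x)
      (1 + ((2*s) * qrt s - (s^2+2) * (s / qrt s)) / (qrt s)^2) s := by
    have hnum : HasDerivAt (fun x : ℝ => x^2 + 2) (2*s) s := by
      simpa using ((hasDerivAt_pow 2 s).add_const 2)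
    exact (hasDerivAt_id s).add (hnum.div (hasDerivAt_qrt s) (ne_of_gt hq))
  refine hd.congr_deriv ?_
  unfold rho''
  field_simp
  linear_combination (2*s) * h2

lemma qrt_u {c : ℝ} (hc : 0 < c) : qrt ((c^2-1)/c) = (c^2+1)/c := by
  have h : ((c^2-1)/c)^2 + 4 = ((c^2+1)/c)^2 := by field_simp; ring
  rw [qrt, h, Real.sqrt_sq (by positivity)]

lemma rho_u {c : ℝ} (hc : 0 < c) : rho ((c^2-1)/c) = c^2 := by
  rw [rho, qrt_u hc]; field_simp; ring

lemma rho'_u {c : ℝ} (hc : 0 < c) : rho' ((c^2-1)/c) = 2*c^3/(c^2+1) := by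
  have h1 : (0:ℝ) < c^2 + 1 := by positivity
  rw [rho', qrt_u hc]; field_simp; ring

lemma rho''_u {c : ℝ} (hc : 0 < c) : rho'' ((c^2-1)/c) = 2*c^4*(c^2+3)/(c^2+1)^3 := by
  have h1 : (0:ℝ) < c^2 + 1 := by positivity
  rw [rho'', qrt_u hc]; field_simp; ring

lemma monotone_hasDerivAt_nonneg {g : ℝ → ℝ} {x d : ℝ} (hg : Monotone g)
    (hd : HasDerivAt g d x) : 0 ≤ d := by
  have h1 : Filter.Tendsto (slope g x) (nhdsWithin x (Set.Ioi x)) (nhds d) :=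
    (hasDerivAt_iff_tendsto_slope.mp hd).mono_left
      (nhdsWithin_mono x (fun y hy => ne_of_gt hy))
  refine ge_of_tendsto h1 ?_
  filter_upwards [self_mem_nhdsWithin] with y hy
  rw [slope_def_field]
  exact div_nonneg (sub_nonneg.2 (hg (le_of_lt hy))) (by simp at hy; linarith)

/-- The shear matrix `[[1, s], [0, 1]]`. -/
noncomputable def Ms (s : ℝ) : Matrix (Fin 2) (Fin 2) ℝ := !![1, s; 0, 1]

lemma Ms_eq (s : ℝ) :
    (1 : Matrix (Fin 2) (Fin 2) ℝ) + s • Matrix.vecMulVec ![(1:ℝ),0] ![(0:ℝ),1] = Ms s := by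
  ext i j
  fin_cases i <;> fin_cases j <;>
    simp [Ms, Matrix.vecMulVec, Matrix.one_apply]

lemma Ms_det (s : ℝ) : (Ms s).det = 1 := by
  simp [Ms, Matrix.det_fin_two_of]

lemma Ms_frobSq (s : ℝ) : frobSq (Ms s) = 2 + s^2 := by
  simp [frobSq, Ms, Fin.sum_univ_two]
  ring

lemma Ms_inner_sqrt (s : ℝ) :
    Real.sqrt ((frobSq (Ms s))^2 - 4 * ((Ms s).det)^2) = |s| * qrt s := by
  rw [Ms_frobSq, Ms_det]
  have : (2 + s^2)^2 - 4*(1:ℝ)^2 = s^2 * (s^2+4) := by ring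
  rw [this, Real.sqrt_mul (sq_nonneg s), Real.sqrt_sq_eq_abs, qrt]

lemma Ms_gap (s : ℝ) : 0 < 2 + s^2 - |s| * qrt s := by
  have h1 := qrt_pos s
  have h2 := qrt_sq s
  have h3 : (|s| * qrt s)^2 = s^2 * (s^2 + 4) := by
    rw [mul_pow, sq_abs, h2]
  nlinarith [abs_nonneg s, mul_nonneg (abs_nonneg s) h1.le]

lemma Ms_sv_prod (s : ℝ) : sv1 (Ms s) * sv2 (Ms s) = 1 := by
  have hgap := Ms_gap s
  have h3 : (|s| * qrt s)^2 = s^2 * (s^2 + 4) := by rw [mul_pow, sq_abs, qrt_sq]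
  rw [sv1, sv2, Ms_inner_sqrt, Ms_frobSq,
    ← Real.sqrt_mul (by nlinarith [mul_nonneg (abs_nonneg s) (qrt_pos s).le])]
  rw [show (2 + s^2 + |s| * qrt s)/2 * ((2 + s^2 - |s| * qrt s)/2) = 1 by nlinarith [h3]]
  exact Real.sqrt_one

lemma Ms_sv_ratio (s : ℝ) : sv1 (Ms s) / sv2 (Ms s) = (2 + s^2 + |s| * qrt s) / 2 := by
  have hgap := Ms_gap s
  have h3 : (|s| * qrt s)^2 = s^2 * (s^2 + 4) := by rw [mul_pow, sq_abs, qrt_sq]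
  have hnum : (0:ℝ) ≤ 2 + s^2 + |s| * qrt s := by
    nlinarith [mul_nonneg (abs_nonneg s) (qrt_pos s).le]
  rw [sv1, sv2, Ms_inner_sqrt, Ms_frobSq, ← Real.sqrt_div (by linarith)]
  rw [show (2 + s^2 + |s| * qrt s)/2 / ((2 + s^2 - |s| * qrt s)/2)
      = ((2 + s^2 + |s| * qrt s)/2)^2 by field_simp; nlinarith [h3]]
  exact Real.sqrt_sq (by linarith)

/-- **Corollary 3.4.** Rank-one convexity of `W(F) = h(λ₁/λ₂) + f(λ₁λ₂)` implies
`b(t) + c(t) = (t² + 4t + 3)h'(t) + 2t(t+1)²h''(t) ≥ 0` for all `t > 0`. -/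
theorem rankOneConvex_implies_b_add_c_nonneg
    (h f : ℝ → ℝ)
    (hh : ContDiffOn ℝ 2 h (Set.Ioi 0))
    (hf : ContDiffOn ℝ 2 f (Set.Ioi 0))
    (hsymm : ∀ t : ℝ, 0 < t → h t = h (1 / t))
    (W : Matrix (Fin 2) (Fin 2) ℝ → ℝ)
    (hW : ∀ F : Matrix (Fin 2) (Fin 2) ℝ, 0 < F.det →
      W F = h (sv1 F / sv2 F) + f (sv1 F * sv2 F))
    (hrc : RankOneConvex W) :
    ∀ t : ℝ, 0 < t →
      bFun h t + cFun h t
        = (t ^ 2 + 4 * t + 3) * deriv h t + 2 * t * (t + 1) ^ 2 * deriv (deriv h) t ∧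
      0 ≤ (t ^ 2 + 4 * t + 3) * deriv h t + 2 * t * (t + 1) ^ 2 * deriv (deriv h) t := by
  -- derivatives of h from ContDiffOn
  have hd1 : ∀ x : ℝ, 0 < x → HasDerivAt h (deriv h x) x := by
    intro x hx
    have := (hh.differentiableOn (by norm_num)).differentiableAt
      (isOpen_Ioi.mem_nhds (by exact hx))
    exact this.hasDerivAt
  have hh' : ContDiffOn ℝ 1 (deriv h) (Set.Ioi 0) :=
    hh.deriv_of_isOpen isOpen_Ioi (by norm_num)
  have hd2 : ∀ x : ℝ, 0 < x → HasDerivAt (deriv h) (deriv (deriv h) x) x := by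
    intro x hx
    have := (hh'.differentiableOn (by norm_num)).differentiableAt
      (isOpen_Ioi.mem_nhds (by exact hx))
    exact this.hasDerivAt
  -- the energy along the shear line
  have hWM : ∀ s : ℝ, W (Ms s) = h (rho s) + f 1 := by
    intro s
    rw [hW (Ms s) (by rw [Ms_det]; norm_num), Ms_sv_prod, Ms_sv_ratio]
    congr 1
    rcases le_or_gt 0 s with hs | hs
    · rw [abs_of_nonneg hs]; rfl
    · rw [abs_of_neg hs]
      have hq := qrt_pos s
      have h2 := qrt_sq s
      have hrpos := rho_pos s
      have hinv : (2 + s^2 + -s * qrt s)/2 = 1 / rho s := by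
        rw [rho]
        rw [eq_div_iff (by positivity)]
        field_simp
        nlinarith [h2]
      rw [hinv, ← hsymm (rho s) hrpos]
  -- convexity of the composed function
  have hconv : ConvexOn ℝ (Set.univ) (fun s : ℝ => h (rho s) + f 1) := by
    have h0 := hrc 1 (by simp) ![(1:ℝ),0] ![(0:ℝ),1]
    have hset : {s : ℝ | 0 < ((1 : Matrix (Fin 2) (Fin 2) ℝ)
        + s • Matrix.vecMulVec ![(1:ℝ),0] ![(0:ℝ),1]).det} = Set.univ := by
      ext s
      simp only [Set.mem_setOf_eq, Ms_eq s, Ms_det s, Set.mem_univ, iff_true]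
      norm_num
    have hfun : (fun s : ℝ => W ((1 : Matrix (Fin 2) (Fin 2) ℝ)
        + s • Matrix.vecMulVec ![(1:ℝ),0] ![(0:ℝ),1]))
        = fun s : ℝ => h (rho s) + f 1 := by
      funext s
      rw [Ms_eq s, hWM s]
    rw [hset, hfun] at h0
    exact h0
  -- derivative of the composed function
  have hgd : ∀ s : ℝ, HasDerivAt (fun s : ℝ => h (rho s) + f 1)
      (deriv h (rho s) * rho' s) s := by
    intro s
    exact (((hd1 (rho s) (rho_pos s)).comp s (hasDerivAt_rho s)).add_const (f 1))
  have hderiv_g : deriv (fun s : ℝ => h (rho s) + f 1)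
      = fun s : ℝ => deriv h (rho s) * rho' s := funext fun s => (hgd s).deriv
  have hmono : Monotone (deriv (fun s : ℝ => h (rho s) + f 1)) := by
    have := hconv.monotoneOn_deriv (fun x _ => (hgd x).differentiableAt)
    exact monotoneOn_univ.mp this
  intro t ht
  constructor
  · unfold bFun cFun; ring
  -- evaluate second derivative at u₀ = (t-1)/√t
  set c := Real.sqrt t with hc_def
  have hc : 0 < c := Real.sqrt_pos.2 ht
  have hc2 : c^2 = t := Real.sq_sqrt ht.le
  set u₀ : ℝ := (c^2 - 1)/c with hu_def
  have hrho_u : rho u₀ = t := by rw [hu_def, rho_u hc, hc2]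
  have hD : HasDerivAt (deriv (fun s : ℝ => h (rho s) + f 1))
      ((deriv (deriv h) t * rho' u₀) * rho' u₀ + deriv h t * rho'' u₀) u₀ := by
    rw [hderiv_g]
    have ha : HasDerivAt (fun s : ℝ => deriv h (rho s))
        (deriv (deriv h) (rho u₀) * rho' u₀) u₀ :=
      (hd2 (rho u₀) (rho_pos u₀)).comp u₀ (hasDerivAt_rho u₀)
    rw [hrho_u] at ha
    have hb := hasDerivAt_rho' u₀
    have := ha.mul hb
    rw [hrho_u] at this
    exact this
  have key : 0 ≤ (deriv (deriv h) t * rho' u₀) * rho' u₀ + deriv h t * rho'' u₀ :=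
    monotone_hasDerivAt_nonneg hmono hD
  rw [hu_def, rho'_u hc, rho''_u hc] at key
  -- final arithmetic
  set A := deriv h t with hA
  set B := deriv (deriv h) t with hB
  have hc1 : (0:ℝ) < c^2 + 1 := by positivity
  have e : (t ^ 2 + 4 * t + 3) * A + 2 * t * (t + 1) ^ 2 * B
      = ((c^2+1)^4/(2*c^4)) * ((B * (2*c^3/(c^2+1))) * (2*c^3/(c^2+1))
        + A * (2*c^4*(c^2+3)/(c^2+1)^3)) := by
    rw [← hc2]
    field_simp
    ring
  rw [e]
  exact mul_nonneg (by positivity) key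
end

section
/- Let W : GL⁺(2) → ℝ be a volumetric-isochorically split energy, W(F) = h(λ₁(F)/λ₂(F)) + f(λ₁(F)·λ₂(F)) with h, f ∈ C²((0,∞);ℝ) and h(t) = h(1/t) for all t > 0. If W is rank-one convex, then h is convex on (0,∞) or f is convex on (0,∞), i.e. h''(t) ≥ 0 for all t > 0 or f''(z) ≥ 0 for all z > 0. -/
open Real Set Matrix

lemma frobSq_diag (c b : ℝ) : frobSq !![c,0;0,b] = c^2 + b^2 := by
  simp [frobSq, Fin.sum_univ_two]

lemma sv1_diag (c b : ℝ) (hc : 0 ≤ c) (hb : 0 ≤ b) : sv1 !![c,0;0,b] = max c b := by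
  rw [sv1, frobSq_diag, Matrix.det_fin_two_of]
  have h1 : (c^2+b^2)^2 - 4*(c*b - 0*0)^2 = ((c^2-b^2))^2 := by ring
  rw [h1, Real.sqrt_sq_eq_abs]
  rcases le_total b c with hbc | hbc
  · rw [abs_of_nonneg (by nlinarith : (0:ℝ) ≤ c^2 - b^2), max_eq_left hbc]
    rw [show (c^2+b^2+(c^2-b^2))/2 = c^2 by ring, Real.sqrt_sq hc]
  · rw [abs_of_nonpos (by nlinarith : c^2 - b^2 ≤ 0), max_eq_right hbc]
    rw [show (c^2+b^2+ -(c^2-b^2))/2 = b^2 by ring, Real.sqrt_sq hb]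

lemma sv2_diag (c b : ℝ) (hc : 0 ≤ c) (hb : 0 ≤ b) : sv2 !![c,0;0,b] = min c b := by
  rw [sv2, frobSq_diag, Matrix.det_fin_two_of]
  have h1 : (c^2+b^2)^2 - 4*(c*b - 0*0)^2 = ((c^2-b^2))^2 := by ring
  rw [h1, Real.sqrt_sq_eq_abs]
  rcases le_total b c with hbc | hbc
  · rw [abs_of_nonneg (by nlinarith : (0:ℝ) ≤ c^2 - b^2), min_eq_right hbc]
    rw [show (c^2+b^2-(c^2-b^2))/2 = b^2 by ring, Real.sqrt_sq hb]
  · rw [abs_of_nonpos (by nlinarith : c^2 - b^2 ≤ 0), min_eq_left hbc]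
    rw [show (c^2+b^2- -(c^2-b^2))/2 = c^2 by ring, Real.sqrt_sq hc]

lemma mono_hasDerivAt_nonneg {φ : ℝ → ℝ} {s : Set ℝ} {x c : ℝ}
    (hs : s ∈ nhds x) (hmono : MonotoneOn φ s) (hd : HasDerivAt φ c x) : 0 ≤ c := by
  have hx : x ∈ s := mem_of_mem_nhds hs
  have htend := hasDerivAt_iff_tendsto_slope.1 hd
  refine ge_of_tendsto htend ?_
  have hmem : ∀ᶠ y in nhdsWithin x {x}ᶜ, y ∈ s :=
    nhdsWithin_le_nhds (Filter.eventually_of_mem hs fun y hy => hy)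
  filter_upwards [hmem, self_mem_nhdsWithin] with y hy hne
  have hne' : y ≠ x := hne
  rcases lt_or_gt_of_ne hne' with hlt | hgt
  · have : φ y ≤ φ x := hmono hy hx hlt.le
    have : (φ y - φ x) / (y - x) ≥ 0 := div_nonneg_of_nonpos (by linarith) (by linarith)
    simpa [slope_def_field, div_eq_iff] using this
  · have : φ x ≤ φ y := hmono hx hy hgt.le
    have : (φ y - φ x) / (y - x) ≥ 0 := div_nonneg (by linarith) (by linarith)
    simpa [slope_def_field] using this


/-- **Lemma 3.5 a).** If `W(F) = h(λ₁/λ₂) + f(λ₁λ₂)` is rank-one convex, then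
`h` is globally convex on `(0,∞)` or `f` is globally convex on `(0,∞)`,
i.e. `h'' ≥ 0` on `(0,∞)` or `f'' ≥ 0` on `(0,∞)`. -/
theorem rankOneConvex_implies_h_or_f_convex
    (h f : ℝ → ℝ)
    (hh : ContDiffOn ℝ 2 h (Set.Ioi 0))
    (hf : ContDiffOn ℝ 2 f (Set.Ioi 0))
    (hsymm : ∀ t : ℝ, 0 < t → h t = h (1 / t))
    (W : Matrix (Fin 2) (Fin 2) ℝ → ℝ)
    (hW : ∀ F : Matrix (Fin 2) (Fin 2) ℝ, 0 < F.det →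
      W F = h (sv1 F / sv2 F) + f (sv1 F * sv2 F))
    (hrc : RankOneConvex W) :
    (∀ t : ℝ, 0 < t → 0 ≤ deriv (deriv h) t) ∨
    (∀ z : ℝ, 0 < z → 0 ≤ deriv (deriv f) z) := by
  by_contra hcon
  push_neg at hcon
  obtain ⟨⟨t0, ht0, hht0⟩, ⟨z0, hz0, hfz0⟩⟩ := hcon
  set b : ℝ := Real.sqrt (z0 / t0) with hbdef
  have hb : 0 < b := Real.sqrt_pos.2 (div_pos hz0 ht0)
  have hb2 : b ^ 2 = z0 / t0 := Real.sq_sqrt (le_of_lt (div_pos hz0 ht0))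
  set a : ℝ := t0 * b with hadef
  have ha : 0 < a := mul_pos ht0 hb
  have hab : a / b = t0 := by field_simp [hadef]; rw [hadef]; ring
  have hprod : a * b = z0 := by
    have : a * b = t0 * b ^ 2 := by rw [hadef]; ring
    rw [this, hb2]; field_simp
  -- the rank-one perturbation
  set E : Matrix (Fin 2) (Fin 2) ℝ := Matrix.vecMulVec ![1,0] ![1,0] with hEdef
  have hE : ∀ t : ℝ, (!![a,0;0,b] + t • E) = !![a+t,0;0,b] := by
    intro t
    ext i j
    fin_cases i <;> fin_cases j <;>
      simp [hEdef, Matrix.vecMulVec_apply, Matrix.add_apply, Matrix.smul_apply]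
  have hdet : ∀ t : ℝ, (!![a,0;0,b] + t • E).det = (a+t)*b := by
    intro t; rw [hE, Matrix.det_fin_two_of]; ring
  have hset : {t : ℝ | 0 < (!![a,0;0,b] + t • E).det} = Ioi (-a) := by
    ext t
    simp only [mem_setOf_eq, mem_Ioi, hdet]
    constructor
    · intro hpos; nlinarith
    · intro ht; exact mul_pos (by linarith) hb
  set g : ℝ → ℝ := fun t => h ((a+t)/b) + f ((a+t)*b) with hgdef
  have heqW : ∀ t ∈ Ioi (-a), W (!![a,0;0,b] + t • E) = g t := by
    intro t ht
    have hc : 0 < a + t := by simp only [mem_Ioi] at ht; linarith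
    rw [hE]
    have hdetpos : 0 < (!![a+t,0;0,b] : Matrix (Fin 2) (Fin 2) ℝ).det := by
      rw [Matrix.det_fin_two_of]; nlinarith
    rw [hW _ hdetpos, sv1_diag _ _ hc.le hb.le, sv2_diag _ _ hc.le hb.le]
    have hmm : max (a+t) b * min (a+t) b = (a+t)*b := by
      rcases le_total b (a+t) with hcb | hcb
      · rw [max_eq_left hcb, min_eq_right hcb]
      · rw [max_eq_right hcb, min_eq_left hcb]; ring
    rw [hmm]
    rcases le_total b (a+t) with hcb | hcb
    · rw [max_eq_left hcb, min_eq_right hcb]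
    · rw [max_eq_right hcb, min_eq_left hcb]
      have := hsymm (b / (a+t)) (div_pos hb hc)
      rw [this, one_div_div]
  -- convexity of g
  have hdetF : (0:ℝ) < (!![a,0;0,b] : Matrix (Fin 2) (Fin 2) ℝ).det := by
    rw [Matrix.det_fin_two_of]; nlinarith
  have hc0 := hrc !![a,0;0,b] hdetF ![1,0] ![1,0]
  rw [← hEdef, hset] at hc0
  have hconv : ConvexOn ℝ (Ioi (-a)) g := by
    refine ⟨convex_Ioi _, fun x hx y hy α β hα hβ hαβ => ?_⟩
    have hxy := (convex_Ioi (-a)) hx hy hα hβ hαβ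
    have h2 := hc0.2 hx hy hα hβ hαβ
    simp only [] at h2
    rw [← heqW _ hx, ← heqW _ hy, ← heqW _ hxy]
    exact h2
  -- differentiability
  have hdh : ∀ s : ℝ, 0 < s → DifferentiableAt ℝ h s := fun s hs =>
    ((hh.differentiableOn (by norm_num)) s hs).differentiableAt (isOpen_Ioi.mem_nhds hs)
  have hdf : ∀ s : ℝ, 0 < s → DifferentiableAt ℝ f s := fun s hs =>
    ((hf.differentiableOn (by norm_num)) s hs).differentiableAt (isOpen_Ioi.mem_nhds hs)
  have hh' : ContDiffOn ℝ 1 (deriv h) (Ioi 0) := hh.deriv_of_isOpen isOpen_Ioi (by norm_num)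
  have hf' : ContDiffOn ℝ 1 (deriv f) (Ioi 0) := hf.deriv_of_isOpen isOpen_Ioi (by norm_num)
  have hdh' : ∀ s : ℝ, 0 < s → DifferentiableAt ℝ (deriv h) s := fun s hs =>
    ((hh'.differentiableOn (by norm_num)) s hs).differentiableAt (isOpen_Ioi.mem_nhds hs)
  have hdf' : ∀ s : ℝ, 0 < s → DifferentiableAt ℝ (deriv f) s := fun s hs =>
    ((hf'.differentiableOn (by norm_num)) s hs).differentiableAt (isOpen_Ioi.mem_nhds hs)
  have Hu : ∀ t : ℝ, HasDerivAt (fun t : ℝ => (a+t)/b) (1/b) t := by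
    intro t
    have := ((hasDerivAt_id t).const_add a).div_const b
    simpa using this
  have Hv : ∀ t : ℝ, HasDerivAt (fun t : ℝ => (a+t)*b) b t := by
    intro t
    have := ((hasDerivAt_id t).const_add a).mul_const b
    simpa using this
  have Hg : ∀ t ∈ Ioi (-a),
      HasDerivAt g (deriv h ((a+t)/b) * (1/b) + deriv f ((a+t)*b) * b) t := by
    intro t ht
    have hc : 0 < a + t := by simp only [mem_Ioi] at ht; linarith
    have h1 := ((hdh _ (div_pos hc hb)).hasDerivAt.comp t (Hu t))
    have h2 := ((hdf _ (mul_pos hc hb)).hasDerivAt.comp t (Hv t))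
    exact h1.add h2
  set φ : ℝ → ℝ := fun t => deriv h ((a+t)/b) * (1/b) + deriv f ((a+t)*b) * b with hφdef
  have hφmono : MonotoneOn φ (Ioi (-a)) := by
    have hmono := hconv.monotoneOn_deriv (fun x hx => (Hg x hx).differentiableAt)
    intro x hx y hy hxy
    have ex : φ x = deriv g x := ((Hg x hx).deriv).symm
    have ey : φ y = deriv g y := ((Hg y hy).deriv).symm
    rw [ex, ey]
    exact hmono hx hy hxy
  have habpos : 0 < a / b := div_pos ha hb
  have hprodpos : 0 < a * b := mul_pos ha hb
  have Hφ0 : HasDerivAt φ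
      ((deriv (deriv h) ((a+0)/b) * (1/b)) * (1/b) + (deriv (deriv f) ((a+0)*b) * b) * b) 0 := by
    have hp1 : (0:ℝ) < (a+0)/b := by simpa using habpos
    have hp2 : (0:ℝ) < (a+0)*b := by simpa using hprodpos
    have h1 := (((hdh' _ hp1).hasDerivAt.comp 0 (Hu 0)).mul_const (1/b))
    have h2 := (((hdf' _ hp2).hasDerivAt.comp 0 (Hv 0)).mul_const b)
    exact h1.add h2
  simp only [add_zero, hab, hprod] at Hφ0
  have hD := mono_hasDerivAt_nonneg (isOpen_Ioi.mem_nhds (by simpa using ha : (0:ℝ) ∈ Ioi (-a))) hφmono Hφ0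
  have hb1 : 0 < 1/b := one_div_pos.2 hb
  nlinarith [mul_pos hb1 hb1, mul_pos hb hb,
    mul_neg_of_neg_of_pos hht0 (mul_pos hb1 hb1),
    mul_neg_of_neg_of_pos hfz0 (mul_pos hb hb)]
end

section
/- Let W : GL⁺(2) → ℝ be a volumetric-isochorically split energy, W(F) = h(λ₁(F)/λ₂(F)) + f(λ₁(F)·λ₂(F)) with h, f ∈ C²((0,∞);ℝ) and h(t) = h(1/t) for all t > 0. If W is rank-one convex, then the function x ↦ h(x) + f(x) is convex on (0,∞). -/
open Real Set Matrix

lemma myA (t : ℝ) : (1 : Matrix (Fin 2) (Fin 2) ℝ) + t • Matrix.vecMulVec ![1,0] ![1,0]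
    = !![1+t, 0; 0, 1] := by
  ext i j
  fin_cases i <;> fin_cases j <;>
    simp [Matrix.vecMulVec_apply, Matrix.one_apply, Matrix.add_apply, Matrix.smul_apply]

lemma myfrob (s : ℝ) : frobSq !![s,0;0,1] = s^2 + 1 := by
  simp [frobSq, Fin.sum_univ_two]

lemma mydet (s : ℝ) : (!![s,0;0,1] : Matrix (Fin 2) (Fin 2) ℝ).det = s := by
  simp [Matrix.det_fin_two_of]

lemma mysv1 (s : ℝ) (hs : 0 < s) : sv1 !![s,0;0,1] = max s 1 := by
  have hsq : (s^2+1)^2 - 4*s^2 = (s^2-1)^2 := by ring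
  rw [sv1, myfrob, mydet, hsq, Real.sqrt_sq_eq_abs]
  rcases le_or_gt 1 s with h1 | h1
  · rw [abs_of_nonneg (by nlinarith), max_eq_left h1,
      show (s^2+1+(s^2-1))/2 = s^2 by ring, Real.sqrt_sq hs.le]
  · rw [abs_of_nonpos (by nlinarith), max_eq_right h1.le,
      show (s^2+1+ -(s^2-1))/2 = 1 by ring, Real.sqrt_one]

lemma mysv2 (s : ℝ) (hs : 0 < s) : sv2 !![s,0;0,1] = min s 1 := by
  have hsq : (s^2+1)^2 - 4*s^2 = (s^2-1)^2 := by ring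
  rw [sv2, myfrob, mydet, hsq, Real.sqrt_sq_eq_abs]
  rcases le_or_gt 1 s with h1 | h1
  · rw [abs_of_nonneg (by nlinarith), min_eq_right h1,
      show (s^2+1-(s^2-1))/2 = 1 by ring, Real.sqrt_one]
  · rw [abs_of_nonpos (by nlinarith), min_eq_left h1.le,
      show (s^2+1- -(s^2-1))/2 = s^2 by ring, Real.sqrt_sq hs.le]

/-- **Lemma 3.5 b).** -/
theorem rankOneConvex_implies_h_add_f_convex
    (h f : ℝ → ℝ)
    (hh : ContDiffOn ℝ 2 h (Set.Ioi 0))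
    (hf : ContDiffOn ℝ 2 f (Set.Ioi 0))
    (hsymm : ∀ t : ℝ, 0 < t → h t = h (1 / t))
    (W : Matrix (Fin 2) (Fin 2) ℝ → ℝ)
    (hW : ∀ F : Matrix (Fin 2) (Fin 2) ℝ, 0 < F.det →
      W F = h (sv1 F / sv2 F) + f (sv1 F * sv2 F))
    (hrc : RankOneConvex W) :
    ConvexOn ℝ (Set.Ioi 0) (fun x : ℝ => h x + f x) := by
  have key := hrc 1 (by simp) ![1,0] ![1,0]
  have hval : ∀ t : ℝ, 0 < 1 + t →
      W ((1 : Matrix (Fin 2) (Fin 2) ℝ) + t • Matrix.vecMulVec ![1,0] ![1,0])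
        = h (1+t) + f (1+t) := by
    intro t ht
    rw [myA t, hW _ (by rw [mydet]; exact ht), mysv1 _ ht, mysv2 _ ht]
    rcases le_or_gt 1 (1+t) with h1 | h1
    · rw [max_eq_left h1, min_eq_right h1, div_one, mul_one]
    · rw [max_eq_right h1.le, min_eq_left h1.le, one_mul, ← hsymm _ ht]
  refine ⟨convex_Ioi 0, fun x hx y hy a b ha hb hab => ?_⟩
  have hx0 : (0:ℝ) < x := hx
  have hy0 : (0:ℝ) < y := hy
  have hmemx : (x-1) ∈ {t : ℝ | 0 < ((1 : Matrix (Fin 2) (Fin 2) ℝ)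
      + t • Matrix.vecMulVec ![1,0] ![1,0]).det} := by
    show (0:ℝ) < _
    rw [myA, mydet]; linarith
  have hmemy : (y-1) ∈ {t : ℝ | 0 < ((1 : Matrix (Fin 2) (Fin 2) ℝ)
      + t • Matrix.vecMulVec ![1,0] ![1,0]).det} := by
    show (0:ℝ) < _
    rw [myA, mydet]; linarith
  have hcomb : (0:ℝ) < a*x + b*y := by
    rcases eq_or_lt_of_le ha with ha0 | ha0
    · have hb1 : b = 1 := by linarith
      rw [← ha0, hb1]; simpa using hy0
    · have : 0 < a*x := mul_pos ha0 hx0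
      nlinarith [mul_nonneg hb hy0.le]
  have := key.2 hmemx hmemy ha hb hab
  simp only [smul_eq_mul] at this ⊢
  have e1 : 1 + (a*(x-1)+b*(y-1)) = a*x+b*y := by linear_combination -hab
  rw [hval (x-1) (by linarith)] at this
  rw [hval (y-1) (by linarith)] at this
  rw [hval (a*(x-1)+b*(y-1)) (by rw [e1]; exact hcomb)] at this
  rw [e1, show 1 + (x-1) = x by ring, show 1 + (y-1) = y by ring] at this
  exact this
end

section
/- Let W : GL⁺(2) → ℝ be a volumetric-isochorically split energy, W(F) = h(λ₁(F)/λ₂(F)) + f(λ₁(F)·λ₂(F)) with h, f ∈ C²((0,∞);ℝ) and h(t) = h(1/t) for all t > 0. If W is rank-one convex, then h'(t) ≥ 0 for all t > 1 and h'(t) ≤ 0 for all t < 1; in particular h is monotone increasing on [1,∞) and monotone decreasing on (0,1]. -/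
open Real Set Matrix

lemma matrix_line (a t : ℝ) :
    !![a,0;0,1] + t • Matrix.vecMulVec ![(1:ℝ),0] ![0,1] = !![a,t;0,1] := by
  ext i j
  fin_cases i <;> fin_cases j <;> simp [Matrix.vecMulVec_apply]

lemma frobSq_line (a t : ℝ) : frobSq !![a,t;0,1] = a^2 + t^2 + 1 := by
  simp [frobSq, Fin.sum_univ_two]

lemma det_line (a t : ℝ) : (!![a,t;0,1] : Matrix (Fin 2) (Fin 2) ℝ).det = a := by
  simp [Matrix.det_fin_two_of]

lemma sv_line (a r s : ℝ) (ha : 1 ≤ a) (har : a ≤ r) (hs : s^2 = (r-a)*(a-1/r)) :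
    sv1 !![a,s;0,1] = Real.sqrt (a*r) ∧ sv2 !![a,s;0,1] = Real.sqrt (a/r) := by
  have hr1 : (1:ℝ) ≤ r := ha.trans har
  have hr0 : (0:ℝ) < r := lt_of_lt_of_le one_pos hr1
  have ha0 : (0:ℝ) < a := lt_of_lt_of_le one_pos ha
  have hfrob : frobSq !![a,s;0,1] = a*r + a/r := by
    rw [frobSq_line, hs]; field_simp; ring
  have hΔ : (a*r+a/r)^2 - 4 * a^2 = (a*r - a/r)^2 := by field_simp; ring
  have hge : 0 ≤ a*r - a/r := by
    have : a/r ≤ a*r := by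
      rw [div_le_iff₀ hr0]
      nlinarith [mul_nonneg (mul_nonneg ha0.le (sub_nonneg.2 hr1)) (by linarith : (0:ℝ) ≤ r+1)]
    linarith
  have hsq : Real.sqrt ((a*r+a/r)^2 - 4*a^2) = a*r - a/r := by
    rw [hΔ, Real.sqrt_sq hge]
  constructor
  · rw [sv1, hfrob, det_line, hsq]
    congr 1; ring
  · rw [sv2, hfrob, det_line, hsq]
    congr 1; ring

lemma ratio_line (a r s : ℝ) (ha : 1 ≤ a) (har : a ≤ r) (hs : s^2 = (r-a)*(a-1/r)) :
    sv1 !![a,s;0,1] / sv2 !![a,s;0,1] = r ∧ sv1 !![a,s;0,1] * sv2 !![a,s;0,1] = a := by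
  have hr1 : (1:ℝ) ≤ r := ha.trans har
  have hr0 : (0:ℝ) < r := lt_of_lt_of_le one_pos hr1
  have ha0 : (0:ℝ) < a := lt_of_lt_of_le one_pos ha
  obtain ⟨h1, h2⟩ := sv_line a r s ha har hs
  constructor
  · rw [h1, h2, ← Real.sqrt_div (by positivity)]
    have : (a*r)/(a/r) = r^2 := by field_simp
    rw [this, Real.sqrt_sq hr0.le]
  · rw [h1, h2, ← Real.sqrt_mul (by positivity)]
    have : a*r*(a/r) = a^2 := by field_simp
    rw [this, Real.sqrt_sq ha0.le]

lemma key_step (h f : ℝ → ℝ) (W : Matrix (Fin 2) (Fin 2) ℝ → ℝ)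
    (hW : ∀ F : Matrix (Fin 2) (Fin 2) ℝ, 0 < F.det →
      W F = h (sv1 F / sv2 F) + f (sv1 F * sv2 F))
    (hrc : RankOneConvex W)
    (a r : ℝ) (ha : 1 ≤ a) (har : a ≤ r) : h a ≤ h r := by
  have ha0 : (0:ℝ) < a := lt_of_lt_of_le one_pos ha
  have hr1 : (1:ℝ) ≤ r := ha.trans har
  have hr0 : (0:ℝ) < r := lt_of_lt_of_le one_pos hr1
  have hprod : 0 ≤ (r-a)*(a-1/r) := by
    apply mul_nonneg (by linarith)
    have h1r : 1/r ≤ 1 := by rw [div_le_one hr0]; exact hr1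
    linarith
  set s := Real.sqrt ((r-a)*(a-1/r)) with hsdef
  have hs : s^2 = (r-a)*(a-1/r) := Real.sq_sqrt hprod
  have hs' : (-s)^2 = (r-a)*(a-1/r) := by rw [neg_pow]; simpa using hs
  have hdetF : (0:ℝ) < (!![a,0;0,1] : Matrix (Fin 2) (Fin 2) ℝ).det := by
    rw [det_line]; exact ha0
  have hconv := hrc _ hdetF ![1,0] ![0,1]
  have hset : {t : ℝ | 0 < (!![a,0;0,1] + t • Matrix.vecMulVec ![(1:ℝ),0] ![0,1]).det}
      = Set.univ := by
    ext t
    simp only [Set.mem_setOf_eq, Set.mem_univ, iff_true, matrix_line, det_line]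
    exact ha0
  rw [hset] at hconv
  have hineq := hconv.2 (Set.mem_univ s) (Set.mem_univ (-s))
    (by norm_num : (0:ℝ) ≤ 1/2) (by norm_num : (0:ℝ) ≤ 1/2) (by norm_num : (1/2:ℝ) + 1/2 = 1)
  simp only [smul_eq_mul] at hineq
  have hmid : (1/2:ℝ) * s + (1/2:ℝ) * (-s) = 0 := by ring
  rw [hmid] at hineq
  have eval : ∀ t : ℝ, t^2 = (r-a)*(a-1/r) →
      W (!![a,0;0,1] + t • Matrix.vecMulVec ![(1:ℝ),0] ![0,1]) = h r + f a := by
    intro t ht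
    rw [matrix_line, hW _ (by rw [det_line]; exact ha0)]
    obtain ⟨h1, h2⟩ := ratio_line a r t ha har ht
    rw [h1, h2]
  have e0 : W (!![a,0;0,1] + (0:ℝ) • Matrix.vecMulVec ![(1:ℝ),0] ![0,1]) = h a + f a := by
    rw [matrix_line, hW _ (by rw [det_line]; exact ha0)]
    obtain ⟨h1, h2⟩ := ratio_line a a 0 ha le_rfl (by ring)
    rw [h1, h2]
  simp only [e0, eval s hs, eval (-s) hs'] at hineq
  linarith

/-- **Lemma 3.5 c).** If `W(F) = h(λ₁/λ₂) + f(λ₁λ₂)` is rank-one convex, then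
`h'(t) ≥ 0` for `t > 1` and `h'(t) ≤ 0` for `0 < t < 1`; in particular `h` is
monotone increasing on `[1,∞)` and monotone decreasing on `(0,1]`. -/
theorem rankOneConvex_implies_h_monotone
    (h f : ℝ → ℝ)
    (hh : ContDiffOn ℝ 2 h (Set.Ioi 0))
    (hf : ContDiffOn ℝ 2 f (Set.Ioi 0))
    (hsymm : ∀ t : ℝ, 0 < t → h t = h (1 / t))
    (W : Matrix (Fin 2) (Fin 2) ℝ → ℝ)
    (hW : ∀ F : Matrix (Fin 2) (Fin 2) ℝ, 0 < F.det →
      W F = h (sv1 F / sv2 F) + f (sv1 F * sv2 F))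
    (hrc : RankOneConvex W) :
    (∀ t : ℝ, 1 < t → 0 ≤ deriv h t) ∧
    (∀ t : ℝ, 0 < t → t < 1 → deriv h t ≤ 0) ∧
    MonotoneOn h (Set.Ici 1) ∧
    AntitoneOn h (Set.Ioc 0 1) := by
  have key : ∀ a r : ℝ, 1 ≤ a → a ≤ r → h a ≤ h r := key_step h f W hW hrc
  have hmono : MonotoneOn h (Set.Ici 1) := fun x hx y _ hxy => key x y hx hxy
  have hant : AntitoneOn h (Set.Ioc 0 1) := by
    intro x hx y hy hxy
    rw [hsymm x hx.1, hsymm y hy.1]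
    exact key (1/y) (1/x) (one_le_one_div hy.1 hy.2) (one_div_le_one_div_of_le hx.1 hxy)
  refine ⟨?_, ?_, hmono, hant⟩
  · intro t ht
    have ht0 : (0:ℝ) < t := by linarith
    have hdiff : DifferentiableAt ℝ h t :=
      (hh.contDiffAt (isOpen_Ioi.mem_nhds ht0)).differentiableAt (by norm_num)
    have hslope := hasDerivAt_iff_tendsto_slope.1 hdiff.hasDerivAt
    have h2 : Filter.Tendsto (slope h t) (nhdsWithin t (Set.Ioi t)) (nhds (deriv h t)) :=
      hslope.mono_left (nhdsWithin_mono t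
        (fun y hy => Set.mem_compl_singleton_iff.2 (ne_of_gt hy)))
    refine ge_of_tendsto h2 ?_
    filter_upwards [self_mem_nhdsWithin] with y hy
    have hty : h t ≤ h y := hmono (by simp [Set.mem_Ici]; linarith) (by simp [Set.mem_Ici]; linarith [Set.mem_Ioi.1 hy]) (le_of_lt hy)
    rw [slope_def_field]
    exact div_nonneg (by linarith) (by linarith [Set.mem_Ioi.1 hy])
  · intro t ht0 ht1
    have hdiff : DifferentiableAt ℝ h t :=
      (hh.contDiffAt (isOpen_Ioi.mem_nhds ht0)).differentiableAt (by norm_num)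
    have hslope := hasDerivAt_iff_tendsto_slope.1 hdiff.hasDerivAt
    have h2 : Filter.Tendsto (slope h t) (nhdsWithin t (Set.Ioi t)) (nhds (deriv h t)) :=
      hslope.mono_left (nhdsWithin_mono t
        (fun y hy => Set.mem_compl_singleton_iff.2 (ne_of_gt hy)))
    refine le_of_tendsto h2 ?_
    filter_upwards [Ioo_mem_nhdsGT_of_mem ⟨le_refl t, ht1⟩] with y hy
    have hty : h y ≤ h t :=
      hant ⟨ht0, le_of_lt ht1⟩ ⟨lt_trans ht0 hy.1, le_of_lt hy.2⟩ (le_of_lt hy.1)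
    rw [slope_def_field]
    exact div_nonpos_of_nonpos_of_nonneg (by linarith) (by linarith [hy.1])
end

section
/- Let W : GL⁺(2) → ℝ be a volumetric-isochorically split energy, W(F) = h(λ₁(F)/λ₂(F)) + f(λ₁(F)·λ₂(F)) with h, f ∈ C²((0,∞);ℝ) and h(t) = h(1/t) for all t > 0. If W is rank-one convex, then (t + 3)·h'(t) + 2t·(t+1)·h''(t) ≥ 0 for all t > 0. -/
open Real Set Matrix

lemma hb_aux {h : ℝ → ℝ} (hh : ContDiffOn ℝ 2 h (Set.Ioi 0)) {x : ℝ} (hx : 0 < x) :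
    HasDerivAt h (deriv h x) x := by
  have h1 : DifferentiableOn ℝ h (Set.Ioi 0) := hh.differentiableOn (by norm_num)
  exact (h1.differentiableAt (Ioi_mem_nhds hx)).hasDerivAt

lemma hc_aux {h : ℝ → ℝ} (hh : ContDiffOn ℝ 2 h (Set.Ioi 0)) {x : ℝ} (hx : 0 < x) :
    HasDerivAt (deriv h) (deriv (deriv h) x) x := by
  have h2 : ContDiffOn ℝ 1 (deriv h) (Set.Ioi 0) :=
    hh.deriv_of_isOpen isOpen_Ioi (by norm_num)
  exact ((h2.differentiableOn (by norm_num)).differentiableAt (Ioi_mem_nhds hx)).hasDerivAt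

lemma hcont_aux {h : ℝ → ℝ} (hh : ContDiffOn ℝ 2 h (Set.Ioi 0)) :
    ContinuousOn (deriv (deriv h)) (Set.Ioi 0) := by
  have h2 : ContDiffOn ℝ 1 (deriv h) (Set.Ioi 0) :=
    hh.deriv_of_isOpen isOpen_Ioi (by norm_num)
  exact h2.continuousOn_deriv_of_isOpen isOpen_Ioi le_rfl

noncomputable def Pfun (t s : ℝ) : ℝ := (t^2+1) + 2*(t^2-1)*s + (t+1)^2*s^2
noncomputable def Pd (t s : ℝ) : ℝ := 2*(t^2-1) + 2*(t+1)^2*s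
noncomputable def Sfun (t s : ℝ) : ℝ := Real.sqrt ((Pfun t s)^2 - 4*t^2)
noncomputable def Rfun (t s : ℝ) : ℝ := (Pfun t s + Sfun t s) / (2*t)
noncomputable def Rd (t s : ℝ) : ℝ := (Pd t s + Pfun t s * Pd t s / Sfun t s) / (2*t)

section facts
variable {t s : ℝ} (ht : 1 < t)
include ht

lemma P_sub_2t : Pfun t s - 2*t = ((t-1) + s*(t+1))^2 := by simp only [Pfun]; ring

lemma P_add_2t_pos : 0 < Pfun t s + 2*t := by
  have h1 := P_sub_2t (t := t) (s := s) ht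
  nlinarith [sq_nonneg ((t-1) + s*(t+1))]

lemma P_pos : 0 < Pfun t s := by
  have h1 := P_sub_2t (t := t) (s := s) ht
  nlinarith [sq_nonneg ((t-1) + s*(t+1))]

lemma P_ge_2t : 2*t ≤ Pfun t s := by
  have h1 := P_sub_2t (t := t) (s := s) ht
  nlinarith [sq_nonneg ((t-1) + s*(t+1))]

lemma Q_nonneg : 0 ≤ (Pfun t s)^2 - 4*t^2 := by
  have h1 := P_ge_2t (t := t) (s := s) ht
  nlinarith

lemma S_nonneg : 0 ≤ Sfun t s := Real.sqrt_nonneg _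

lemma S_sq : (Sfun t s)^2 = (Pfun t s)^2 - 4*t^2 :=
  Real.sq_sqrt (Q_nonneg ht)

lemma S_lt_P : Sfun t s < Pfun t s := by
  have h1 := S_sq (t := t) (s := s) ht
  have h2 := S_nonneg (t := t) (s := s) ht
  have h3 := P_pos (t := t) (s := s) ht
  nlinarith

lemma Q_pos (hs : s ∈ Set.Ioo (-((t-1)/(t+1))) ((t-1)/(t+1))) :
    0 < (Pfun t s)^2 - 4*t^2 := by
  have ht1 : (0:ℝ) < t + 1 := by linarith
  have hlin : 0 < (t-1) + s*(t+1) := by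
    have h1 : -((t-1)/(t+1)) < s := hs.1
    have h2 : -(t-1) < s * (t+1) := by
      have h1' : -((t-1)/(t+1)) * (t+1) < s * (t+1) :=
        mul_lt_mul_of_pos_right h1 ht1
      have : -((t-1)/(t+1)) * (t+1) = -(t-1) := by field_simp
      linarith
    linarith
  have h2 := P_add_2t_pos (t := t) (s := s) ht
  have h3 := P_sub_2t (t := t) (s := s) ht
  nlinarith [mul_pos (mul_pos hlin hlin) h2]

lemma S_pos (hs : s ∈ Set.Ioo (-((t-1)/(t+1))) ((t-1)/(t+1))) :
    0 < Sfun t s := Real.sqrt_pos.mpr (Q_pos ht hs)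

lemma P_zero : Pfun t 0 = t^2 + 1 := by simp [Pfun]

lemma S_zero : Sfun t 0 = t^2 - 1 := by
  have h1 : (Pfun t 0)^2 - 4*t^2 = (t^2-1)^2 := by rw [P_zero ht]; ring
  rw [Sfun, h1, Real.sqrt_sq (by nlinarith)]

lemma R_zero : Rfun t 0 = t := by
  have ht0 : (0:ℝ) < t := by linarith
  rw [Rfun, P_zero ht, S_zero ht]
  field_simp
  ring

lemma Rd_zero : Rd t 0 = 2*t := by
  have ht0 : (0:ℝ) < t := by linarith
  have hD : t^2 - 1 ≠ 0 := by nlinarith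
  rw [Rd, P_zero ht, S_zero ht, Pd]
  field_simp
  ring

lemma R_pos : 0 < Rfun t s := by
  have ht0 : (0:ℝ) < t := by linarith
  exact div_pos (by nlinarith [P_pos (t := t) (s := s) ht, S_nonneg (t := t) (s := s) ht])
    (by linarith)

end facts

lemma P_hasDeriv (t s : ℝ) : HasDerivAt (Pfun t) (Pd t s) s := by
  have h1 : HasDerivAt (fun x : ℝ => (t^2+1) + 2*(t^2-1)*x + (t+1)^2*x^2)
      (0 + 2*(t^2-1)*1 + (t+1)^2*(2*s)) s := by
    apply HasDerivAt.add
    · exact (hasDerivAt_const s (t^2+1)).add ((hasDerivAt_id s).const_mul (2*(t^2-1)))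
    · simpa using (hasDerivAt_pow 2 s).const_mul ((t+1)^2)
  have h2 : (0 + 2*(t^2-1)*1 + (t+1)^2*(2*s)) = Pd t s := by rw [Pd]; ring
  rw [← h2]; exact h1

lemma S_hasDeriv {t s : ℝ} (hQ : 0 < (Pfun t s)^2 - 4*t^2) :
    HasDerivAt (Sfun t) (Pfun t s * Pd t s / Sfun t s) s := by
  have hS : Sfun t s = Real.sqrt ((Pfun t s)^2 - 4*t^2) := rfl
  have hinner : HasDerivAt (fun x => (Pfun t x)^2 - 4*t^2) (2 * Pfun t s * Pd t s) s := by
    have := ((P_hasDeriv t s).pow 2).sub_const (4*t^2)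
    simpa [mul_comm, mul_assoc, mul_left_comm] using this
  have hsq := (Real.hasDerivAt_sqrt (ne_of_gt hQ)).comp s hinner
  have hspos : 0 < Sfun t s := Real.sqrt_pos.mpr hQ
  have : 1 / (2 * Real.sqrt ((Pfun t s)^2 - 4*t^2)) * (2 * Pfun t s * Pd t s)
      = Pfun t s * Pd t s / Sfun t s := by
    rw [← hS]; field_simp
  rw [← this]
  exact hsq

lemma R_hasDeriv {t s : ℝ} (ht : 1 < t) (hQ : 0 < (Pfun t s)^2 - 4*t^2) :
    HasDerivAt (Rfun t) (Rd t s) s := by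
  have ht0 : (0:ℝ) < t := by linarith
  have := ((P_hasDeriv t s).add (S_hasDeriv hQ)).div_const (2*t)
  exact this

/-- second derivative value of `Rfun t` at `0` -/
lemma Rd_hasDeriv {t : ℝ} (ht : 1 < t) :
    HasDerivAt (Rd t) (2*t*(t+3)/(t+1)) 0 := by
  have ht0 : (0:ℝ) < t := by linarith
  have hD : (0:ℝ) < t^2 - 1 := by nlinarith
  have hP0 : Pfun t 0 = t^2 + 1 := by simp [Pfun]
  have hS0 : Sfun t 0 = t^2 - 1 := by
    have h1 : (Pfun t 0)^2 - 4*t^2 = (t^2-1)^2 := by rw [hP0]; ring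
    rw [Sfun, h1, Real.sqrt_sq (by nlinarith)]
  have hQ0 : 0 < (Pfun t 0)^2 - 4*t^2 := by rw [hP0]; nlinarith
  have hPd0 : Pd t 0 = 2*(t^2-1) := by simp [Pd]
  -- N := Pfun * Pd  has derivative Pd^2 + Pfun * (2(t+1)^2)
  have hPd : HasDerivAt (Pd t) (2*(t+1)^2) 0 := by
    have h1 : HasDerivAt (fun x : ℝ => 2*(t^2-1) + 2*(t+1)^2*x) (2*(t+1)^2) 0 := by
      simpa using ((hasDerivAt_id (0:ℝ)).const_mul (2*(t+1)^2)).const_add (2*(t^2-1))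
    exact h1
  have hN : HasDerivAt (fun x => Pfun t x * Pd t x)
      (Pd t 0 * Pd t 0 + Pfun t 0 * (2*(t+1)^2)) 0 :=
    (P_hasDeriv t 0).mul hPd
  have hSne : Sfun t 0 ≠ 0 := by rw [hS0]; exact ne_of_gt hD
  have hfrac : HasDerivAt (fun x => Pfun t x * Pd t x / Sfun t x)
      (((Pd t 0 * Pd t 0 + Pfun t 0 * (2*(t+1)^2)) * Sfun t 0
        - Pfun t 0 * Pd t 0 * (Pfun t 0 * Pd t 0 / Sfun t 0)) / (Sfun t 0)^2) 0 :=
    hN.div (S_hasDeriv hQ0) hSne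
  have hsum := (hPd.add hfrac).div_const (2*t)
  have : (2*(t+1)^2 + ((Pd t 0 * Pd t 0 + Pfun t 0 * (2*(t+1)^2)) * Sfun t 0
        - Pfun t 0 * Pd t 0 * (Pfun t 0 * Pd t 0 / Sfun t 0)) / (Sfun t 0)^2) / (2*t)
      = 2*t*(t+3)/(t+1) := by
    rw [hP0, hS0, hPd0]
    have h1 : t + 1 ≠ 0 := by linarith
    field_simp
    ring
  rw [this] at hsum
  exact hsum

section mat
variable {t : ℝ} (ht : 1 < t)

noncomputable def Gmat (t s : ℝ) : Matrix (Fin 2) (Fin 2) ℝ :=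
  !![t, 0; 0, 1] + s • Matrix.vecMulVec ![Real.sqrt t, -1] ![Real.sqrt t, 1]

include ht

lemma Gmat_eq (s : ℝ) : Gmat t s = !![t + s*t, s*Real.sqrt t; -(s*Real.sqrt t), 1 - s] := by
  have ht0 : (0:ℝ) < t := by linarith
  have hst : Real.sqrt t * Real.sqrt t = t := Real.mul_self_sqrt ht0.le
  ext i j
  have hst2 : Real.sqrt t ^ 2 = t := Real.sq_sqrt ht0.le
  fin_cases i <;> fin_cases j <;>
    simp [Gmat, Matrix.vecMulVec_apply, hst2] <;>
    (first | (exact Or.inl hst) | ring)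

lemma Gmat_det (s : ℝ) : (Gmat t s).det = t := by
  have ht0 : (0:ℝ) < t := by linarith
  have hst : Real.sqrt t * Real.sqrt t = t := Real.mul_self_sqrt ht0.le
  rw [Gmat_eq ht s, Matrix.det_fin_two_of]
  linear_combination (s^2) * hst

lemma Gmat_frobSq (s : ℝ) : frobSq (Gmat t s) = Pfun t s := by
  have ht0 : (0:ℝ) < t := by linarith
  have hst : Real.sqrt t * Real.sqrt t = t := Real.mul_self_sqrt ht0.le
  rw [Gmat_eq ht s]
  simp [frobSq, Fin.sum_univ_two, Pfun]
  linear_combination (2*s^2) * hst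

end mat

section sv
variable {t : ℝ} (ht : 1 < t)
include ht

lemma sv_prod (s : ℝ) : sv1 (Gmat t s) * sv2 (Gmat t s) = t := by
  have ht0 : (0:ℝ) < t := by linarith
  have hsq := S_sq (t := t) (s := s) ht
  have hP := P_pos (t := t) (s := s) ht
  have hS0 := S_nonneg (t := t) (s := s) ht
  have hSP := S_lt_P (t := t) (s := s) ht
  rw [sv1, sv2, Gmat_frobSq ht s, Gmat_det ht s]
  have hSdef : Real.sqrt ((Pfun t s)^2 - 4*t^2) = Sfun t s := rfl
  rw [show Pfun t s ^ 2 - 4 * t ^ 2 = (Pfun t s)^2 - 4*t^2 from rfl, hSdef]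
  rw [← Real.sqrt_mul (by linarith : (0:ℝ) ≤ (Pfun t s + Sfun t s)/2)]
  rw [show (Pfun t s + Sfun t s)/2 * ((Pfun t s - Sfun t s)/2) = t^2 by
    linear_combination (-(1:ℝ)/4) * hsq]
  exact Real.sqrt_sq ht0.le

lemma sv_ratio {s : ℝ} (hs : s ∈ Set.Ioo (-((t-1)/(t+1))) ((t-1)/(t+1))) :
    sv1 (Gmat t s) / sv2 (Gmat t s) = Rfun t s := by
  have ht0 : (0:ℝ) < t := by linarith
  have hsq := S_sq (t := t) (s := s) ht
  have hP := P_pos (t := t) (s := s) ht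
  have hS := S_pos ht hs
  have hSP := S_lt_P (t := t) (s := s) ht
  have hSdef : Real.sqrt ((Pfun t s)^2 - 4*t^2) = Sfun t s := rfl
  have h2 : (0:ℝ) < (Pfun t s - Sfun t s)/2 := by linarith
  have hsv2 : 0 < sv2 (Gmat t s) := by
    rw [sv2, Gmat_frobSq ht s, Gmat_det ht s, hSdef]
    exact Real.sqrt_pos.mpr h2
  have hRnn : 0 ≤ Rfun t s := le_of_lt (R_pos ht)
  have hkey : (Pfun t s + Sfun t s)/2 = (Rfun t s)^2 * ((Pfun t s - Sfun t s)/2) := by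
    rw [Rfun]
    have h2t : (2*t) ≠ 0 := by positivity
    field_simp
    linear_combination hsq
  have h1 : sv1 (Gmat t s) = Rfun t s * sv2 (Gmat t s) := by
    rw [sv1, sv2, Gmat_frobSq ht s, Gmat_det ht s, hSdef, hkey,
      Real.sqrt_mul (sq_nonneg _), Real.sqrt_sq hRnn]
  rw [h1, mul_div_assoc, div_self (ne_of_gt hsv2), mul_one]

end sv

lemma deriv_nonneg_of_monotoneOn {g : ℝ → ℝ} {δ : ℝ} (hδ : 0 < δ)
    (hm : MonotoneOn g (Set.Ioo (-δ) δ)) {m : ℝ} (hd : HasDerivAt g m 0) : 0 ≤ m := by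
  have h1 : Filter.Tendsto (slope g 0) (nhdsWithin 0 (Set.Ioi 0)) (nhds m) :=
    (hasDerivAt_iff_tendsto_slope.mp hd).mono_left
      (nhdsWithin_mono 0 (fun x hx => Set.mem_compl_singleton_iff.mpr (ne_of_gt hx)))
  refine ge_of_tendsto h1 ?_
  filter_upwards [Ioo_mem_nhdsGT_of_mem (Set.left_mem_Ico.mpr hδ)] with x hx
  have hx0 : (0:ℝ) ∈ Set.Ioo (-δ) δ := ⟨by linarith, hδ⟩
  have hxI : x ∈ Set.Ioo (-δ) δ := ⟨by linarith [hx.1], hx.2⟩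
  have hgx := hm hx0 hxI (le_of_lt hx.1)
  rw [slope_def_field]
  apply div_nonneg (by linarith) (by linarith [hx.1])

lemma key_gt_one {h f : ℝ → ℝ} {W : Matrix (Fin 2) (Fin 2) ℝ → ℝ}
    (hh : ContDiffOn ℝ 2 h (Set.Ioi 0))
    (hW : ∀ F : Matrix (Fin 2) (Fin 2) ℝ, 0 < F.det →
      W F = h (sv1 F / sv2 F) + f (sv1 F * sv2 F))
    (hrc : RankOneConvex W) {t : ℝ} (ht : 1 < t) :
    0 ≤ (t + 3) * deriv h t + 2 * t * (t + 1) * deriv (deriv h) t := by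
  have ht0 : (0:ℝ) < t := by linarith
  have hδ : 0 < (t-1)/(t+1) := div_pos (by linarith) (by linarith)
  have hdet : (!![t, 0; 0, 1] : Matrix (Fin 2) (Fin 2) ℝ).det = t := by
    rw [Matrix.det_fin_two_of]; ring
  have hconv0 := hrc !![t, 0; 0, 1] (by rw [hdet]; exact ht0)
    ![Real.sqrt t, -1] ![Real.sqrt t, 1]
  have hsub : Set.Ioo (-((t-1)/(t+1))) ((t-1)/(t+1)) ⊆
      {s : ℝ | 0 < (!![t, 0; 0, 1] +
        s • Matrix.vecMulVec ![Real.sqrt t, -1] ![Real.sqrt t, 1]).det} := by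
    intro s _
    show 0 < (Gmat t s).det
    rw [Gmat_det ht s]; exact ht0
  have hconvI : ConvexOn ℝ (Set.Ioo (-((t-1)/(t+1))) ((t-1)/(t+1)))
      (fun s : ℝ => W (Gmat t s)) := hconv0.subset hsub (convex_Ioo _ _)
  have heq : Set.EqOn (fun s : ℝ => W (Gmat t s)) (fun s : ℝ => h (Rfun t s) + f t)
      (Set.Ioo (-((t-1)/(t+1))) ((t-1)/(t+1))) := by
    intro s hs
    have hdets : 0 < (Gmat t s).det := by rw [Gmat_det ht s]; exact ht0
    simp only
    rw [hW _ hdets, sv_ratio ht hs, sv_prod ht s]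
  have hconvPsi : ConvexOn ℝ (Set.Ioo (-((t-1)/(t+1))) ((t-1)/(t+1)))
      (fun s : ℝ => h (Rfun t s) + f t) := hconvI.congr heq
  have hpsid : ∀ s ∈ Set.Ioo (-((t-1)/(t+1))) ((t-1)/(t+1)),
      HasDerivAt (fun x : ℝ => h (Rfun t x) + f t) (deriv h (Rfun t s) * Rd t s) s := by
    intro s hs
    have hR := R_hasDeriv ht (Q_pos ht hs)
    have hcomp := (hb_aux hh (R_pos ht : 0 < Rfun t s)).comp s hR
    simpa [Function.comp] using hcomp.add_const (f t)
  have hderiv_eq : ∀ s ∈ Set.Ioo (-((t-1)/(t+1))) ((t-1)/(t+1)),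
      deriv (fun x : ℝ => h (Rfun t x) + f t) s = deriv h (Rfun t s) * Rd t s :=
    fun s hs => (hpsid s hs).deriv
  have hmono : MonotoneOn (fun s => deriv h (Rfun t s) * Rd t s)
      (Set.Ioo (-((t-1)/(t+1))) ((t-1)/(t+1))) := by
    have h1 := hconvPsi.monotoneOn_deriv (fun x hx => (hpsid x hx).differentiableAt)
    intro x hx y hy hxy
    show deriv h (Rfun t x) * Rd t x ≤ deriv h (Rfun t y) * Rd t y
    rw [← hderiv_eq x hx, ← hderiv_eq y hy]
    exact h1 hx hy hxy
  have h00 : (0:ℝ) ∈ Set.Ioo (-((t-1)/(t+1))) ((t-1)/(t+1)) := ⟨by linarith, hδ⟩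
  have hQ0 : 0 < (Pfun t 0)^2 - 4*t^2 := Q_pos ht h00
  have hbR : HasDerivAt (fun s : ℝ => deriv h (Rfun t s))
      (deriv (deriv h) t * Rd t 0) 0 := by
    have hRt : Rfun t 0 = t := R_zero ht
    have h1 := (hc_aux hh (show (0:ℝ) < Rfun t 0 by rw [hRt]; exact ht0)).comp 0
      (R_hasDeriv ht hQ0)
    rw [hRt] at h1
    simpa [Function.comp_def] using h1
  have hprod : HasDerivAt (fun s => deriv h (Rfun t s) * Rd t s)
      (deriv (deriv h) t * Rd t 0 * Rd t 0 + deriv h (Rfun t 0) * (2*t*(t+3)/(t+1))) 0 :=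
    hbR.mul (Rd_hasDeriv ht)
  rw [R_zero ht, Rd_zero ht] at hprod
  have hm0 : 0 ≤ deriv (deriv h) t * (2*t) * (2*t) + deriv h t * (2*t*(t+3)/(t+1)) :=
    deriv_nonneg_of_monotoneOn hδ hmono hprod
  have hfac : deriv (deriv h) t * (2*t) * (2*t) + deriv h t * (2*t*(t+3)/(t+1))
      = (2*t/(t+1)) * ((t + 3) * deriv h t + 2 * t * (t + 1) * deriv (deriv h) t) := by
    field_simp
    ring
  rw [hfac] at hm0
  have hk : 0 < 2*t/(t+1) := by positivity
  nlinarith [hm0, hk]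

lemma sym_b {h : ℝ → ℝ} (hh : ContDiffOn ℝ 2 h (Set.Ioi 0))
    (hsymm : ∀ t : ℝ, 0 < t → h t = h (1 / t)) {x : ℝ} (hx : 0 < x) :
    deriv h x = deriv h x⁻¹ * (-(x^2)⁻¹) := by
  have hxinv : 0 < x⁻¹ := inv_pos.mpr hx
  have hdx : HasDerivAt (fun y : ℝ => h y⁻¹) (deriv h x⁻¹ * (-(x^2)⁻¹)) x := by
    have := (hb_aux hh hxinv).comp x (hasDerivAt_inv (ne_of_gt hx))
    simpa [Function.comp_def] using this
  have hev : h =ᶠ[nhds x] (fun y : ℝ => h y⁻¹) := by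
    filter_upwards [Ioi_mem_nhds hx] with y hy
    simpa [one_div] using hsymm y hy
  exact (hb_aux hh hx).unique (hdx.congr_of_eventuallyEq hev)

lemma sym_c {h : ℝ → ℝ} (hh : ContDiffOn ℝ 2 h (Set.Ioi 0))
    (hsymm : ∀ t : ℝ, 0 < t → h t = h (1 / t)) {x : ℝ} (hx : 0 < x) :
    deriv (deriv h) x
      = deriv (deriv h) x⁻¹ * ((x^2)⁻¹)^2 + deriv h x⁻¹ * (2*x/(x^2)^2) := by
  have hxinv : 0 < x⁻¹ := inv_pos.mpr hx
  have hx2 : (x^2) ≠ 0 := by positivity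
  have hu : HasDerivAt (fun y : ℝ => deriv h y⁻¹)
      (deriv (deriv h) x⁻¹ * (-(x^2)⁻¹)) x := by
    have := (hc_aux hh hxinv).comp x (hasDerivAt_inv (ne_of_gt hx))
    simpa [Function.comp_def] using this
  have hsq : HasDerivAt (fun y : ℝ => y^2) (2*x) x := by simpa using hasDerivAt_pow 2 x
  have hv : HasDerivAt (fun y : ℝ => -((y^2)⁻¹)) (2*x/(x^2)^2) x := by
    have h2 := (hsq.inv hx2).neg
    have h3 : (2*x/(x^2)^2) = -(-(2*x)/(x^2)^2) := by ring
    rw [h3]; exact h2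
  have hg : HasDerivAt (fun y : ℝ => deriv h y⁻¹ * (-((y^2)⁻¹)))
      (deriv (deriv h) x⁻¹ * (-(x^2)⁻¹) * (-((x^2)⁻¹)) + deriv h x⁻¹ * (2*x/(x^2)^2)) x :=
    hu.mul hv
  have hev : (deriv h) =ᶠ[nhds x] (fun y : ℝ => deriv h y⁻¹ * (-((y^2)⁻¹))) := by
    filter_upwards [Ioi_mem_nhds hx] with y hy
    exact sym_b hh hsymm hy
  have := (hc_aux hh hx).unique (hg.congr_of_eventuallyEq hev)
  rw [this]; ring

/-- **Lemma 3.5 e).** If `W(F) = h(λ₁/λ₂) + f(λ₁λ₂)` is rank-one convex, then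
`(t + 3)h'(t) + 2t(t+1)h''(t) ≥ 0` for all `t > 0`. -/
theorem rankOneConvex_implies_necessary_e
    (h f : ℝ → ℝ)
    (hh : ContDiffOn ℝ 2 h (Set.Ioi 0))
    (hf : ContDiffOn ℝ 2 f (Set.Ioi 0))
    (hsymm : ∀ t : ℝ, 0 < t → h t = h (1 / t))
    (W : Matrix (Fin 2) (Fin 2) ℝ → ℝ)
    (hW : ∀ F : Matrix (Fin 2) (Fin 2) ℝ, 0 < F.det →
      W F = h (sv1 F / sv2 F) + f (sv1 F * sv2 F))
    (hrc : RankOneConvex W) :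
    ∀ t : ℝ, 0 < t →
      0 ≤ (t + 3) * deriv h t + 2 * t * (t + 1) * deriv (deriv h) t := by
  intro t ht0
  rcases lt_trichotomy t 1 with hlt | heq1 | hgt
  · -- 0 < t < 1 : use symmetry
    have hinv : 1 < t⁻¹ := (one_lt_inv₀ ht0).mpr hlt
    have hkey := key_gt_one hh hW hrc hinv
    have e1 := sym_b hh hsymm ht0
    have e2 := sym_c hh hsymm ht0
    have htne : t ≠ 0 := ne_of_gt ht0
    have f1 : deriv h t⁻¹ = -(t^2) * deriv h t := by
      field_simp at e1
      rw [inv_eq_one_div]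
      linarith
    have f2 : deriv (deriv h) t⁻¹ = t^4 * deriv (deriv h) t + 2*t^3 * deriv h t := by
      rw [f1] at e2
      field_simp at e2
      rw [inv_eq_one_div]
      linarith
    rw [f1, f2] at hkey
    have hiden : (t⁻¹ + 3) * (-(t^2) * deriv h t)
        + 2 * t⁻¹ * (t⁻¹ + 1) * (t^4 * deriv (deriv h) t + 2*t^3 * deriv h t)
        = t * ((t + 3) * deriv h t + 2 * t * (t + 1) * deriv (deriv h) t) := by
      field_simp
      ring
    rw [hiden] at hkey
    nlinarith [hkey, ht0]
  · -- t = 1 : limit from the right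
    subst heq1
    have hb1 : ContinuousAt (deriv h) 1 := (hc_aux hh one_pos).continuousAt
    have hc1 : ContinuousAt (deriv (deriv h)) 1 :=
      ((hcont_aux hh) 1 (by norm_num : (1:ℝ) ∈ Set.Ioi 0)).continuousAt
        (Ioi_mem_nhds one_pos)
    have hB : ContinuousAt
        (fun x : ℝ => (x + 3) * deriv h x + 2*x*(x+1)*deriv (deriv h) x) 1 := by
      apply ContinuousAt.add
      · exact (continuousAt_id.add continuousAt_const).mul hb1
      · exact (((continuousAt_const.mul continuousAt_id)).mul
          (continuousAt_id.add continuousAt_const)).mul hc1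
    have hev : ∀ᶠ x in nhdsWithin 1 (Set.Ioi 1),
        0 ≤ (x + 3) * deriv h x + 2*x*(x+1)*deriv (deriv h) x := by
      filter_upwards [self_mem_nhdsWithin] with x hx
      exact key_gt_one hh hW hrc hx
    have := ge_of_tendsto (hB.continuousWithinAt.tendsto) hev
    simpa using this
  · exact key_gt_one hh hW hrc hgt
end

section
/- Let μ > 0 and f ∈ C²((0,∞);ℝ), and define W : GL⁺(2) → ℝ by W(F) = μ·K(F) + f(det F), where K(F) = ‖F‖²/(2·det F) is the distortion function (‖·‖ the Frobenius norm). Then W is rank-one convex if and only if f is convex on (0,∞). -/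
open Real Set Matrix

lemma aux_lpos {c d x y a b : ℝ} (hx : 0 < c*x+d) (hy : 0 < c*y+d)
    (ha : 0 ≤ a) (hb : 0 ≤ b) (hab : a+b = 1) : 0 < c*(a*x+b*y)+d := by
  have key : c*(a*x+b*y)+d = a*(c*x+d)+b*(c*y+d) := by linear_combination (-d)*hab
  rw [key]
  rcases eq_or_lt_of_le ha with h|h
  · have hb1 : b = 1 := by linarith
    rw [← h, hb1]; simpa using hy
  · nlinarith [mul_nonneg hb hy.le, mul_pos h hx]

lemma aux_convK {α β γ c d : ℝ} (hN : 0 ≤ α*d^2 - β*c*d + γ*c^2)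
    {x y a b : ℝ}
    (hx : 0 < c*x+d) (hy : 0 < c*y+d) (ha : 0 ≤ a) (hb : 0 ≤ b) (hab : a+b = 1) :
    (α*(a*x+b*y)^2 + β*(a*x+b*y) + γ) / (2*(c*(a*x+b*y)+d)) ≤
      a * ((α*x^2+β*x+γ)/(2*(c*x+d))) + b * ((α*y^2+β*y+γ)/(2*(c*y+d))) := by
  have hz : 0 < c*(a*x+b*y)+d := aux_lpos hx hy ha hb hab
  rw [← sub_nonneg]
  have hb' : b = 1 - a := by linarith
  subst hb'
  have hid : a * ((α*x^2+β*x+γ)/(2*(c*x+d))) + (1-a) * ((α*y^2+β*y+γ)/(2*(c*y+d)))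
      - (α*(a*x+(1-a)*y)^2 + β*(a*x+(1-a)*y) + γ) / (2*(c*(a*x+(1-a)*y)+d)) =
      (a*(1-a)*(x-y)^2*(α*d^2 - β*c*d + γ*c^2)) /
        (2*(c*x+d)*((c*y+d))*((c*(a*x+(1-a)*y)+d))) := by
    have hx' := hx.ne'; have hy' := hy.ne'; have hz' := hz.ne'
    have d1 := (mul_pos two_pos hx).ne'; have d2 := (mul_pos two_pos hy).ne'
    have d3 := (mul_pos two_pos hz).ne'
    rw [mul_div_assoc', mul_div_assoc', div_add_div _ _ d1 d2,
      div_sub_div _ _ (mul_ne_zero d1 d2) d3,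
      div_eq_div_iff (mul_ne_zero (mul_ne_zero d1 d2) d3)
        (mul_ne_zero (mul_ne_zero (mul_ne_zero two_ne_zero hx') hy') hz')]
    ring
  rw [hid]
  apply div_nonneg
  · exact mul_nonneg (mul_nonneg (mul_nonneg ha hb) (sq_nonneg _)) hN
  · positivity

lemma aux_det_line (F : Matrix (Fin 2) (Fin 2) ℝ) (ξ η : Fin 2 → ℝ) (t : ℝ) :
    (F + t • Matrix.vecMulVec ξ η).det =
      (F 0 0 * (ξ 1 * η 1) + F 1 1 * (ξ 0 * η 0) - F 0 1 * (ξ 1 * η 0) - F 1 0 * (ξ 0 * η 1)) * t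
        + F.det := by
  simp [Matrix.det_fin_two, Matrix.add_apply, Matrix.smul_apply, Matrix.vecMulVec_apply,
    smul_eq_mul]
  ring

lemma aux_frobSq_line (F : Matrix (Fin 2) (Fin 2) ℝ) (ξ η : Fin 2 → ℝ) (t : ℝ) :
    frobSq (F + t • Matrix.vecMulVec ξ η) =
      ((ξ 0 ^ 2 + ξ 1 ^ 2) * (η 0 ^ 2 + η 1 ^ 2)) * t ^ 2
        + (2 * (F 0 0 * (ξ 0 * η 0) + F 0 1 * (ξ 0 * η 1) + F 1 0 * (ξ 1 * η 0) + F 1 1 * (ξ 1 * η 1))) * t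
        + frobSq F := by
  simp [frobSq, Fin.sum_univ_succ, Matrix.add_apply, Matrix.smul_apply, Matrix.vecMulVec_apply,
    smul_eq_mul]
  ring

lemma aux_frobSq_nonneg (F : Matrix (Fin 2) (Fin 2) ℝ) : 0 ≤ frobSq F :=
  Finset.sum_nonneg fun _ _ => Finset.sum_nonneg fun _ _ => sq_nonneg _

/-- **Lemma 3.6 (generalized Hadamard energies).** The energy
`W(F) = μ K(F) + f(det F)` with `K(F) = ‖F‖²/(2 det F)` (Frobenius norm) and
`μ > 0` is rank-one convex if and only if `f` is convex on `(0,∞)`. -/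
theorem rankOneConvex_distortion_energy_iff
    (μ : ℝ) (hμ : 0 < μ)
    (f : ℝ → ℝ)
    (hf : ContDiffOn ℝ 2 f (Set.Ioi 0))
    (W : Matrix (Fin 2) (Fin 2) ℝ → ℝ)
    (hW : ∀ F : Matrix (Fin 2) (Fin 2) ℝ, 0 < F.det →
      W F = μ * (frobSq F / (2 * F.det)) + f F.det) :
    RankOneConvex W ↔ ConvexOn ℝ (Set.Ioi 0) f := by
  constructor
  · intro hR
    refine ⟨convex_Ioi 0, ?_⟩
    intro x hx y hy a b ha hb hab
    simp only [smul_eq_mul]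
    rw [mem_Ioi] at hx hy
    have hz : 0 < a*x+b*y := aux_lpos (c := 1) (d := 0) (by simpa using hx) (by simpa using hy)
        ha hb hab |>.trans_eq (by ring)
    have key : ∀ B : ℝ, 0 < B →
        f (a*x+b*y) ≤ a * f x + b * f y + μ*B^2/2*(a/x + b/y - 1/(a*x+b*y)) := by
      intro B hB
      set F : Matrix (Fin 2) (Fin 2) ℝ := !![(1:ℝ),0;0,B] with hF
      have h00 : F 0 0 = 1 := by simp [hF]
      have h01 : F 0 1 = 0 := by simp [hF]
      have h10 : F 1 0 = 0 := by simp [hF]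
      have h11 : F 1 1 = B := by simp [hF]
      have hFdet : F.det = B := by simp [hF, Matrix.det_fin_two_of]
      have hFfrob : frobSq F = 1 + B^2 := by
        simp only [frobSq, Fin.sum_univ_succ, hF]
        norm_num
      have hdet : ∀ t : ℝ, (F + t • Matrix.vecMulVec ![1,0] ![1,0]).det = B*t + B := by
        intro t
        rw [aux_det_line]
        simp [h00, h01, h10, h11, hFdet]
      have hfr : ∀ t : ℝ, frobSq (F + t • Matrix.vecMulVec ![1,0] ![1,0])
          = (t+1)^2 + B^2 := by
        intro t
        rw [aux_frobSq_line]
        simp only [h00, h01, h10, h11, hFfrob]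
        norm_num
        try ring
      have hcv := hR F (by rw [hFdet]; exact hB) ![1,0] ![1,0]
      have memx : (x/B - 1) ∈ {t : ℝ | 0 < (F + t • Matrix.vecMulVec ![1,0] ![1,0]).det} := by
        simp only [mem_setOf_eq, hdet]
        have : B*(x/B-1) + B = x := by field_simp; ring
        rw [this]; exact hx
      have memy : (y/B - 1) ∈ {t : ℝ | 0 < (F + t • Matrix.vecMulVec ![1,0] ![1,0]).det} := by
        simp only [mem_setOf_eq, hdet]
        have : B*(y/B-1) + B = y := by field_simp; ring
        rw [this]; exact hy
      have hineq := hcv.2 memx memy ha hb hab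
      simp only [smul_eq_mul] at hineq
      have hcomb : a*(x/B-1) + b*(y/B-1) = (a*x+b*y)/B - 1 := by
        field_simp
        linear_combination (-B)*hab
      rw [hcomb] at hineq
      have hdx : 0 < (F + (x/B-1) • Matrix.vecMulVec ![1,0] ![1,0]).det := memx
      have hdy : 0 < (F + (y/B-1) • Matrix.vecMulVec ![1,0] ![1,0]).det := memy
      have hdz : 0 < (F + ((a*x+b*y)/B-1) • Matrix.vecMulVec ![1,0] ![1,0]).det := by
        rw [hdet]
        have : B*((a*x+b*y)/B-1) + B = a*x+b*y := by field_simp; ring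
        rw [this]; exact hz
      rw [hW _ hdz, hW _ hdx, hW _ hdy] at hineq
      rw [hdet, hdet, hdet, hfr, hfr, hfr] at hineq
      have ex : B*(x/B-1) + B = x := by field_simp; ring
      have ey : B*(y/B-1) + B = y := by field_simp; ring
      have ez : B*((a*x+b*y)/B-1) + B = a*x+b*y := by field_simp; ring
      rw [ex, ey, ez] at hineq
      have nx : (x/B-1+1)^2 + B^2 = x^2/B^2 + B^2 := by field_simp; ring
      have ny : (y/B-1+1)^2 + B^2 = y^2/B^2 + B^2 := by field_simp; ring
      have nz : ((a*x+b*y)/B-1+1)^2 + B^2 = (a*x+b*y)^2/B^2 + B^2 := by field_simp; ring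
      rw [nx, ny, nz] at hineq
      have e : ∀ s : ℝ, 0 < s → μ * ((s^2/B^2 + B^2) / (2*s))
          = μ*s/(2*B^2) + μ*B^2/2*(1/s) := by
        intro s hs
        field_simp
      rw [e x hx, e y hy, e _ hz] at hineq
      have h1 : a*(μ*x/(2*B^2)) + b*(μ*y/(2*B^2)) = μ*(a*x+b*y)/(2*B^2) := by ring
      have h2 : μ*B^2/2*(a/x + b/y - 1/(a*x+b*y))
          = a*(μ*B^2/2*(1/x)) + b*(μ*B^2/2*(1/y)) - μ*B^2/2*(1/(a*x+b*y)) := by ring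
      linarith [hineq, h1, h2]
    by_contra hcon
    push_neg at hcon
    set z := a*x+b*y with hzdef
    set δ := f z - (a*f x + b*f y) with hδdef
    have hδ : 0 < δ := by simp only [hδdef]; linarith
    set C := μ/2*(a/x + b/y - 1/z) with hC
    set B := Real.sqrt (δ/(2*(|C|+1))) with hBdef
    have hfrac : 0 < δ/(2*(|C|+1)) := by positivity
    have hB : 0 < B := Real.sqrt_pos.2 hfrac
    have hB2 : B^2 = δ/(2*(|C|+1)) := Real.sq_sqrt hfrac.le
    have hk := key B hB
    have hE : μ*B^2/2*(a/x + b/y - 1/z) = C * B^2 := by rw [hC]; ring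
    rw [hE] at hk
    have hCB : C * B^2 < δ := by
      have h1 : C * B^2 ≤ |C| * B^2 :=
        mul_le_mul_of_nonneg_right (le_abs_self C) (sq_nonneg B)
      have h2 : |C| * B^2 < δ := by
        rw [hB2, mul_div_assoc']
        rw [div_lt_iff₀ (by positivity)]
        have habs : 0 ≤ |C| := abs_nonneg C
        nlinarith [mul_nonneg habs hδ.le]
      linarith
    linarith
  · intro hconv
    intro F hF ξ η
    set c : ℝ := F 0 0 * (ξ 1 * η 1) + F 1 1 * (ξ 0 * η 0) - F 0 1 * (ξ 1 * η 0)
        - F 1 0 * (ξ 0 * η 1) with hc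
    set d : ℝ := F.det with hd
    set α : ℝ := (ξ 0 ^ 2 + ξ 1 ^ 2) * (η 0 ^ 2 + η 1 ^ 2) with hα
    set β : ℝ := 2 * (F 0 0 * (ξ 0 * η 0) + F 0 1 * (ξ 0 * η 1) + F 1 0 * (ξ 1 * η 0)
        + F 1 1 * (ξ 1 * η 1)) with hβ
    set γ : ℝ := frobSq F with hγ
    have hdet : ∀ t : ℝ, (F + t • Matrix.vecMulVec ξ η).det = c*t + d :=
      fun t => aux_det_line F ξ η t
    have hfr : ∀ t : ℝ, frobSq (F + t • Matrix.vecMulVec ξ η) = α*t^2 + β*t + γ :=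
      fun t => aux_frobSq_line F ξ η t
    have hq : ∀ t : ℝ, 0 ≤ α*t^2 + β*t + γ := fun t => by
      rw [← hfr t]; exact aux_frobSq_nonneg _
    have hα0 : 0 ≤ α := by positivity
    have hN : 0 ≤ α*d^2 - β*c*d + γ*c^2 := by
      by_cases hc0 : c = 0
      · rw [hc0]; ring_nf; positivity
      · have h := hq (-d/c)
        have hrw : α*d^2 - β*c*d + γ*c^2 = c^2 * (α*(-d/c)^2 + β*(-d/c) + γ) := by
          field_simp; ring
        rw [hrw]
        exact mul_nonneg (sq_nonneg c) h
    constructor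
    · intro u hu v hv a b ha hb hab
      simp only [mem_setOf_eq, hdet] at hu hv ⊢
      simp only [smul_eq_mul]
      exact aux_lpos hu hv ha hb hab
    · intro u hu v hv a b ha hb hab
      simp only [mem_setOf_eq, hdet] at hu hv
      simp only [smul_eq_mul]
      have hz : 0 < c*(a*u+b*v) + d := aux_lpos hu hv ha hb hab
      rw [hW _ (by rw [hdet]; exact hz), hW _ (by rw [hdet]; exact hu),
          hW _ (by rw [hdet]; exact hv)]
      rw [hdet, hdet, hdet, hfr, hfr, hfr]
      have hK := aux_convK hN hu hv ha hb hab
      have hKμ := mul_le_mul_of_nonneg_left hK hμ.le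
      have hline : c*(a*u+b*v)+d = a*(c*u+d)+b*(c*v+d) := by linear_combination (-d)*hab
      have hfpart := hconv.2 (mem_Ioi.2 hu) (mem_Ioi.2 hv) ha hb hab
      simp only [smul_eq_mul] at hfpart
      rw [← hline] at hfpart
      linarith [hKμ, hfpart]
end

section
/- Let μ, κ > 0 and h ∈ C²((0,∞);ℝ) with h(t) = h(1/t) for all t > 0, and define W : GL⁺(2) → ℝ by W(F) = μ·h(λ₁(F)/λ₂(F)) + (κ/2)·h(λ₁(F)·λ₂(F)). Then W is rank-one convex if and only if h is convex on (0,∞). -/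
open Real Set Matrix

/-! ### Auxiliary scalar lemmas -/

lemma cs2 (x y x' y' : ℝ) : x*x' + y*y' ≤ Real.sqrt (x^2+y^2) * Real.sqrt (x'^2+y'^2) := by
  have h1 : (0:ℝ) ≤ Real.sqrt (x^2+y^2) := Real.sqrt_nonneg _
  have h2 : (0:ℝ) ≤ Real.sqrt (x'^2+y'^2) := Real.sqrt_nonneg _
  have e1 : Real.sqrt (x^2+y^2) ^ 2 = x^2+y^2 := Real.sq_sqrt (by positivity)
  have e2 : Real.sqrt (x'^2+y'^2) ^ 2 = x'^2+y'^2 := Real.sq_sqrt (by positivity)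
  nlinarith [sq_nonneg (x*y' - x'*y), mul_nonneg h1 h2,
    sq_nonneg (x*x'+y*y' - Real.sqrt (x^2+y^2) * Real.sqrt (x'^2+y'^2))]

lemma sqrt_triangle (x y x' y' l l' : ℝ) (hl : 0 ≤ l) (hl' : 0 ≤ l') :
    Real.sqrt ((l*x+l'*x')^2 + (l*y+l'*y')^2) ≤ l*Real.sqrt (x^2+y^2) + l'*Real.sqrt (x'^2+y'^2) := by
  have e1 : Real.sqrt (x^2+y^2) ^ 2 = x^2+y^2 := Real.sq_sqrt (by positivity)
  have e2 : Real.sqrt (x'^2+y'^2) ^ 2 = x'^2+y'^2 := Real.sq_sqrt (by positivity)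
  have hcs := cs2 x y x' y'
  have hR : 0 ≤ l*Real.sqrt (x^2+y^2) + l'*Real.sqrt (x'^2+y'^2) := by positivity
  have key : (l*x+l'*x')^2 + (l*y+l'*y')^2 ≤ (l*Real.sqrt (x^2+y^2) + l'*Real.sqrt (x'^2+y'^2))^2 := by
    have expand : (l*Real.sqrt (x^2+y^2) + l'*Real.sqrt (x'^2+y'^2))^2
        = l^2*(Real.sqrt (x^2+y^2)^2) + 2*l*l'*(Real.sqrt (x^2+y^2)*Real.sqrt (x'^2+y'^2))
          + l'^2*(Real.sqrt (x'^2+y'^2)^2) := by ring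
    rw [expand, e1, e2]
    nlinarith [mul_le_mul_of_nonneg_left hcs (mul_nonneg hl hl')]
  calc Real.sqrt ((l*x+l'*x')^2 + (l*y+l'*y')^2)
      ≤ Real.sqrt ((l*Real.sqrt (x^2+y^2) + l'*Real.sqrt (x'^2+y'^2))^2) := Real.sqrt_le_sqrt key
    _ = _ := Real.sqrt_sq hR

lemma ratio_conv (X x1 x2 y1 y2 l l' : ℝ) (hX : 0 ≤ X) (hXle : X ≤ l*x1+l'*x2)
    (hy1 : 0 < y1) (hy2 : 0 < y2) (hl : 0 ≤ l) (hl' : 0 ≤ l') (hll : l + l' = 1) :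
    X^2/(4*(l*y1+l'*y2)) ≤ l*(x1^2/(4*y1)) + l'*(x2^2/(4*y2)) := by
  have hyσ : 0 < l*y1+l'*y2 := by
    nlinarith [lt_min hy1 hy2,
      mul_le_mul_of_nonneg_left (min_le_left y1 y2) hl,
      mul_le_mul_of_nonneg_left (min_le_right y1 y2) hl']
  have h1 : X^2 ≤ (l*x1+l'*x2)^2 := by nlinarith
  rw [div_le_iff₀ (by positivity)]
  have e : (l*(x1^2/(4*y1)) + l'*(x2^2/(4*y2))) = (l*x1^2*y2 + l'*x2^2*y1)/(4*(y1*y2)) := by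
    field_simp
  rw [e, div_mul_eq_mul_div, le_div_iff₀ (by positivity)]
  nlinarith [mul_nonneg (mul_nonneg hl hl') (sq_nonneg (x1*y2 - x2*y1)),
    mul_le_mul_of_nonneg_right h1 (by positivity : (0:ℝ) ≤ 4*(y1*y2))]

lemma comb_pos (a b l l' : ℝ) (ha : 0 < a) (hb : 0 < b) (hl : 0 ≤ l) (hl' : 0 ≤ l')
    (hll : l + l' = 1) : 0 < l * a + l' * b := by
  rcases eq_or_lt_of_le hl with h | h
  · rw [← h]; nlinarith
  · nlinarith [mul_pos h ha, mul_nonneg hl' hb.le]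

lemma hmono_aux (h : ℝ → ℝ) (hconv : ConvexOn ℝ (Set.Ioi 0) h)
    (hsymm : ∀ t : ℝ, 0 < t → h t = h (1 / t)) :
    ∀ x y : ℝ, 1 ≤ x → x ≤ y → h x ≤ h y := by
  intro x y hx hxy
  rcases eq_or_lt_of_le hxy with rfl | hlt
  · exact le_refl _
  · have hy1 : 1 < y := lt_of_le_of_lt hx hlt
    have hy0 : 0 < y := by linarith
    have hinv : 1/y < 1 := by rw [div_lt_one hy0]; linarith
    have hgap : 0 < y - 1/y := by linarith
    set s : ℝ := (y - x) / (y - 1/y) with hs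
    have hs0 : 0 ≤ s := div_nonneg (by linarith) hgap.le
    have hs1 : s ≤ 1 := by
      rw [div_le_one hgap]; linarith
    have hc := hconv.2 (show (1/y : ℝ) ∈ Set.Ioi 0 by simpa using hy0)
      (show y ∈ Set.Ioi 0 from hy0) hs0 (by linarith : (0:ℝ) ≤ 1 - s) (by ring)
    have e1 : s * (y - 1/y) = y - x := div_mul_cancel₀ _ hgap.ne'
    have hcomb : s • (1/y) + (1 - s) • y = x := by
      simp only [smul_eq_mul]; nlinarith [e1]
    rw [hcomb] at hc
    have hsym' : h (1/y) = h y := (hsymm y hy0).symm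
    simp only [smul_eq_mul, hsym'] at hc
    calc h x ≤ s * h y + (1 - s) * h y := hc
      _ = h y := by ring

/-! ### Auxiliary matrix lemmas -/

noncomputable def uu (X : Matrix (Fin 2) (Fin 2) ℝ) : ℝ := (X 0 0 - X 1 1)^2 + (X 0 1 + X 1 0)^2
noncomputable def vv (X : Matrix (Fin 2) (Fin 2) ℝ) : ℝ := (X 0 0 + X 1 1)^2 + (X 0 1 - X 1 0)^2

lemma frobSq_eq (X : Matrix (Fin 2) (Fin 2) ℝ) : frobSq X = (uu X + vv X)/2 := by
  simp [frobSq, uu, vv, Fin.sum_univ_two]; ring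

lemma det4 (X : Matrix (Fin 2) (Fin 2) ℝ) : 4 * X.det = vv X - uu X := by
  rw [Matrix.det_fin_two]; simp [uu, vv]; ring

lemma disc_eq (X : Matrix (Fin 2) (Fin 2) ℝ) : (frobSq X)^2 - 4*(X.det)^2 = uu X * vv X := by
  have h4 := det4 X
  have hd : X.det = (vv X - uu X)/4 := by linarith
  rw [frobSq_eq, hd]; ring

lemma uu_nonneg (X : Matrix (Fin 2) (Fin 2) ℝ) : 0 ≤ uu X := by unfold uu; positivity
lemma vv_nonneg (X : Matrix (Fin 2) (Fin 2) ℝ) : 0 ≤ vv X := by unfold vv; positivity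

lemma sv1_eq (X : Matrix (Fin 2) (Fin 2) ℝ) :
    sv1 X = (Real.sqrt (vv X) + Real.sqrt (uu X))/2 := by
  have e1 : Real.sqrt (uu X)^2 = uu X := Real.sq_sqrt (uu_nonneg X)
  have e2 : Real.sqrt (vv X)^2 = vv X := Real.sq_sqrt (vv_nonneg X)
  rw [sv1, disc_eq, Real.sqrt_mul (uu_nonneg X), frobSq_eq]
  have : ((uu X + vv X)/2 + Real.sqrt (uu X) * Real.sqrt (vv X))/2
      = ((Real.sqrt (vv X) + Real.sqrt (uu X))/2)^2 := by
    nlinarith [e1, e2]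
  rw [this, Real.sqrt_sq (by positivity)]

lemma sv2_eq (X : Matrix (Fin 2) (Fin 2) ℝ) (hd : 0 ≤ X.det) :
    sv2 X = (Real.sqrt (vv X) - Real.sqrt (uu X))/2 := by
  have e1 : Real.sqrt (uu X)^2 = uu X := Real.sq_sqrt (uu_nonneg X)
  have e2 : Real.sqrt (vv X)^2 = vv X := Real.sq_sqrt (vv_nonneg X)
  have huv : uu X ≤ vv X := by nlinarith [det4 X]
  have hs : Real.sqrt (uu X) ≤ Real.sqrt (vv X) := Real.sqrt_le_sqrt huv
  rw [sv2, disc_eq, Real.sqrt_mul (uu_nonneg X), frobSq_eq]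
  have : ((uu X + vv X)/2 - Real.sqrt (uu X) * Real.sqrt (vv X))/2
      = ((Real.sqrt (vv X) - Real.sqrt (uu X))/2)^2 := by
    nlinarith [e1, e2]
  rw [this, Real.sqrt_sq (by linarith)]

lemma sv2_lt (X : Matrix (Fin 2) (Fin 2) ℝ) (hd : 0 < X.det) :
    Real.sqrt (uu X) < Real.sqrt (vv X) := by
  have huv : uu X < vv X := by nlinarith [det4 X]
  exact Real.sqrt_lt_sqrt (uu_nonneg X) huv

lemma sv_prod_s10 (X : Matrix (Fin 2) (Fin 2) ℝ) (hd : 0 < X.det) :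
    sv1 X * sv2 X = X.det := by
  rw [sv1_eq, sv2_eq X hd.le]
  have e1 : Real.sqrt (uu X)^2 = uu X := Real.sq_sqrt (uu_nonneg X)
  have e2 : Real.sqrt (vv X)^2 = vv X := Real.sq_sqrt (vv_nonneg X)
  nlinarith [det4 X]

lemma sv_ratio_s10 (X : Matrix (Fin 2) (Fin 2) ℝ) (hd : 0 < X.det) :
    sv1 X / sv2 X = (Real.sqrt (vv X) + Real.sqrt (uu X))^2 / (4 * X.det) := by
  have e1 : Real.sqrt (uu X)^2 = uu X := Real.sq_sqrt (uu_nonneg X)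
  have e2 : Real.sqrt (vv X)^2 = vv X := Real.sq_sqrt (vv_nonneg X)
  have hlt := sv2_lt X hd
  have h0 : (0:ℝ) ≤ Real.sqrt (uu X) := Real.sqrt_nonneg _
  rw [sv1_eq, sv2_eq X hd.le, div_eq_div_iff (by linarith) (by positivity)]
  nlinarith [det4 X]

lemma Xapply (F : Matrix (Fin 2) (Fin 2) ℝ) (ξ η : Fin 2 → ℝ) (t : ℝ) (i j : Fin 2) :
    (F + t • Matrix.vecMulVec ξ η) i j = F i j + t * (ξ i * η j) := by
  simp [Matrix.add_apply, Matrix.smul_apply, Matrix.vecMulVec_apply]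

lemma detX (F : Matrix (Fin 2) (Fin 2) ℝ) (ξ η : Fin 2 → ℝ) (t : ℝ) :
    (F + t • Matrix.vecMulVec ξ η).det
      = F.det + t * (F 0 0 * (ξ 1 * η 1) + F 1 1 * (ξ 0 * η 0)
          - F 0 1 * (ξ 1 * η 0) - F 1 0 * (ξ 0 * η 1)) := by
  rw [Matrix.det_fin_two, Matrix.det_fin_two, Xapply, Xapply, Xapply, Xapply]
  ring

lemma Rge1 (X : Matrix (Fin 2) (Fin 2) ℝ) (hd : 0 < X.det) :
    1 ≤ (Real.sqrt (vv X) + Real.sqrt (uu X))^2 / (4 * X.det) := by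
  have e1 : Real.sqrt (uu X)^2 = uu X := Real.sq_sqrt (uu_nonneg X)
  have e2 : Real.sqrt (vv X)^2 = vv X := Real.sq_sqrt (vv_nonneg X)
  rw [le_div_iff₀ (by positivity)]
  nlinarith [det4 X, Real.sqrt_nonneg (uu X), Real.sqrt_nonneg (vv X),
    mul_nonneg (Real.sqrt_nonneg (uu X)) (Real.sqrt_nonneg (vv X))]

/-- The hard direction: convexity of `h` implies rank-one convexity of `W`. -/
lemma reverse_dir (μ κ : ℝ) (hμ : 0 < μ) (hκ : 0 < κ) (h : ℝ → ℝ)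
    (hconv : ConvexOn ℝ (Set.Ioi 0) h)
    (hsymm : ∀ t : ℝ, 0 < t → h t = h (1 / t))
    (W : Matrix (Fin 2) (Fin 2) ℝ → ℝ)
    (hW : ∀ F : Matrix (Fin 2) (Fin 2) ℝ, 0 < F.det →
      W F = μ * h (sv1 F / sv2 F) + κ / 2 * h (sv1 F * sv2 F)) :
    RankOneConvex W := by
  intro F hF ξ η
  have hdet : ∀ t a b l l' : ℝ, l + l' = 1 → t = l * a + l' * b →
      (F + t • Matrix.vecMulVec ξ η).det
        = l * (F + a • Matrix.vecMulVec ξ η).det + l' * (F + b • Matrix.vecMulVec ξ η).det := by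
    intro t a b l l' hll ht
    rw [detX, detX, detX, ht]
    linear_combination (-(F.det)) * hll
  constructor
  · -- convexity of the parameter set
    intro a ha b hb l l' hl hl' hll
    simp only [mem_setOf_eq] at ha hb ⊢
    rw [hdet _ a b l l' hll (by simp [smul_eq_mul])]
    exact comb_pos _ _ _ _ ha hb hl hl' hll
  · intro a ha b hb l l' hl hl' hll
    simp only [mem_setOf_eq] at ha hb
    simp only [smul_eq_mul]
    set σ : ℝ := l * a + l' * b with hσdef
    have hdσeq := hdet σ a b l l' hll rfl
    have hdσ : 0 < (F + σ • Matrix.vecMulVec ξ η).det := by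
      rw [hdσeq]; exact comb_pos _ _ _ _ ha hb hl hl' hll
    rw [hW _ hdσ, hW _ ha, hW _ hb,
      sv_ratio_s10 _ hdσ, sv_ratio_s10 _ ha, sv_ratio_s10 _ hb,
      sv_prod_s10 _ hdσ, sv_prod_s10 _ ha, sv_prod_s10 _ hb]
    -- entrywise affine combination
    have hc : ∀ i j : Fin 2, (F + σ • Matrix.vecMulVec ξ η) i j
        = l * (F + a • Matrix.vecMulVec ξ η) i j + l' * (F + b • Matrix.vecMulVec ξ η) i j := by
      intro i j
      rw [Xapply, Xapply, Xapply, hσdef]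
      linear_combination (-(F i j)) * hll
    -- A-bound
    have hvve : vv (F + σ • Matrix.vecMulVec ξ η)
        = (l * ((F + a • Matrix.vecMulVec ξ η) 0 0 + (F + a • Matrix.vecMulVec ξ η) 1 1)
            + l' * ((F + b • Matrix.vecMulVec ξ η) 0 0 + (F + b • Matrix.vecMulVec ξ η) 1 1))^2
        + (l * ((F + a • Matrix.vecMulVec ξ η) 0 1 - (F + a • Matrix.vecMulVec ξ η) 1 0)
            + l' * ((F + b • Matrix.vecMulVec ξ η) 0 1 - (F + b • Matrix.vecMulVec ξ η) 1 0))^2 := by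
      simp only [vv]; rw [hc 0 0, hc 1 1, hc 0 1, hc 1 0]; ring
    have huue : uu (F + σ • Matrix.vecMulVec ξ η)
        = (l * ((F + a • Matrix.vecMulVec ξ η) 0 0 - (F + a • Matrix.vecMulVec ξ η) 1 1)
            + l' * ((F + b • Matrix.vecMulVec ξ η) 0 0 - (F + b • Matrix.vecMulVec ξ η) 1 1))^2
        + (l * ((F + a • Matrix.vecMulVec ξ η) 0 1 + (F + a • Matrix.vecMulVec ξ η) 1 0)
            + l' * ((F + b • Matrix.vecMulVec ξ η) 0 1 + (F + b • Matrix.vecMulVec ξ η) 1 0))^2 := by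
      simp only [uu]; rw [hc 0 0, hc 1 1, hc 0 1, hc 1 0]; ring
    have hA : Real.sqrt (vv (F + σ • Matrix.vecMulVec ξ η))
        ≤ l * Real.sqrt (vv (F + a • Matrix.vecMulVec ξ η))
          + l' * Real.sqrt (vv (F + b • Matrix.vecMulVec ξ η)) := by
      rw [hvve]
      have := sqrt_triangle
        ((F + a • Matrix.vecMulVec ξ η) 0 0 + (F + a • Matrix.vecMulVec ξ η) 1 1)
        ((F + a • Matrix.vecMulVec ξ η) 0 1 - (F + a • Matrix.vecMulVec ξ η) 1 0)
        ((F + b • Matrix.vecMulVec ξ η) 0 0 + (F + b • Matrix.vecMulVec ξ η) 1 1)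
        ((F + b • Matrix.vecMulVec ξ η) 0 1 - (F + b • Matrix.vecMulVec ξ η) 1 0)
        l l' hl hl'
      simpa only [vv] using this
    have hB : Real.sqrt (uu (F + σ • Matrix.vecMulVec ξ η))
        ≤ l * Real.sqrt (uu (F + a • Matrix.vecMulVec ξ η))
          + l' * Real.sqrt (uu (F + b • Matrix.vecMulVec ξ η)) := by
      rw [huue]
      have := sqrt_triangle
        ((F + a • Matrix.vecMulVec ξ η) 0 0 - (F + a • Matrix.vecMulVec ξ η) 1 1)
        ((F + a • Matrix.vecMulVec ξ η) 0 1 + (F + a • Matrix.vecMulVec ξ η) 1 0)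
        ((F + b • Matrix.vecMulVec ξ η) 0 0 - (F + b • Matrix.vecMulVec ξ η) 1 1)
        ((F + b • Matrix.vecMulVec ξ η) 0 1 + (F + b • Matrix.vecMulVec ξ η) 1 0)
        l l' hl hl'
      simpa only [uu] using this
    -- ratio bound
    set Ra : ℝ := (Real.sqrt (vv (F + a • Matrix.vecMulVec ξ η))
      + Real.sqrt (uu (F + a • Matrix.vecMulVec ξ η)))^2
      / (4 * (F + a • Matrix.vecMulVec ξ η).det) with hRa
    set Rb : ℝ := (Real.sqrt (vv (F + b • Matrix.vecMulVec ξ η))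
      + Real.sqrt (uu (F + b • Matrix.vecMulVec ξ η)))^2
      / (4 * (F + b • Matrix.vecMulVec ξ η).det) with hRb
    have hRσle : (Real.sqrt (vv (F + σ • Matrix.vecMulVec ξ η))
        + Real.sqrt (uu (F + σ • Matrix.vecMulVec ξ η)))^2
        / (4 * (F + σ • Matrix.vecMulVec ξ η).det) ≤ l * Ra + l' * Rb := by
      rw [hdσeq, hRa, hRb]
      exact ratio_conv _ _ _ _ _ l l'
        (by positivity)
        (by linarith)
        ha hb hl hl' hll
    have hRσ1 : 1 ≤ (Real.sqrt (vv (F + σ • Matrix.vecMulVec ξ η))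
        + Real.sqrt (uu (F + σ • Matrix.vecMulVec ξ η)))^2
        / (4 * (F + σ • Matrix.vecMulVec ξ η).det) := Rge1 _ hdσ
    have hRa1 : 1 ≤ Ra := Rge1 _ ha
    have hRb1 : 1 ≤ Rb := Rge1 _ hb
    have key1 : h ((Real.sqrt (vv (F + σ • Matrix.vecMulVec ξ η))
        + Real.sqrt (uu (F + σ • Matrix.vecMulVec ξ η)))^2
        / (4 * (F + σ • Matrix.vecMulVec ξ η).det)) ≤ l * h Ra + l' * h Rb := by
      have step1 := hmono_aux h hconv hsymm _ _ hRσ1 (le_trans hRσle (le_refl _))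
      have step2 : h (l * Ra + l' * Rb) ≤ l * h Ra + l' * h Rb := by
        have := hconv.2 (show Ra ∈ Set.Ioi 0 by exact lt_of_lt_of_le one_pos hRa1)
          (show Rb ∈ Set.Ioi 0 by exact lt_of_lt_of_le one_pos hRb1) hl hl' hll
        simpa only [smul_eq_mul] using this
      linarith
    have key2 : h ((F + σ • Matrix.vecMulVec ξ η).det)
        ≤ l * h ((F + a • Matrix.vecMulVec ξ η).det) + l' * h ((F + b • Matrix.vecMulVec ξ η).det) := by
      rw [hdσeq]
      have := hconv.2 (show (F + a • Matrix.vecMulVec ξ η).det ∈ Set.Ioi 0 from ha)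
        (show (F + b • Matrix.vecMulVec ξ η).det ∈ Set.Ioi 0 from hb) hl hl' hll
      simpa only [smul_eq_mul] using this
    linarith [mul_le_mul_of_nonneg_left key1 hμ.le,
      mul_le_mul_of_nonneg_left key2 (by positivity : (0:ℝ) ≤ κ/2)]

/-- **Idealized planar isotropic energy.** For `μ, κ > 0` and `h` with
`h(t) = h(1/t)`, the energy `W(F) = μ h(λ₁/λ₂) + (κ/2) h(λ₁λ₂)` is rank-one
convex if and only if `h` is convex on `(0,∞)`. -/
theorem rankOneConvex_idealized_iff
    (μ κ : ℝ) (hμ : 0 < μ) (hκ : 0 < κ)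
    (h : ℝ → ℝ)
    (hh : ContDiffOn ℝ 2 h (Set.Ioi 0))
    (hsymm : ∀ t : ℝ, 0 < t → h t = h (1 / t))
    (W : Matrix (Fin 2) (Fin 2) ℝ → ℝ)
    (hW : ∀ F : Matrix (Fin 2) (Fin 2) ℝ, 0 < F.det →
      W F = μ * h (sv1 F / sv2 F) + κ / 2 * h (sv1 F * sv2 F)) :
    RankOneConvex W ↔ ConvexOn ℝ (Set.Ioi 0) h := by
  constructor
  · intro hROC
    have key := hROC 1 (by norm_num [Matrix.det_one]) ![(1:ℝ),0] ![(1:ℝ),0]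
    have hdet1 : ∀ t : ℝ,
        ((1 : Matrix (Fin 2) (Fin 2) ℝ) + t • Matrix.vecMulVec ![(1:ℝ),0] ![(1:ℝ),0]).det = 1 + t := by
      intro t
      rw [detX]
      norm_num [Matrix.det_one, Matrix.one_apply]
    have hWval : ∀ t : ℝ, -1 < t →
        W ((1 : Matrix (Fin 2) (Fin 2) ℝ) + t • Matrix.vecMulVec ![(1:ℝ),0] ![(1:ℝ),0])
          = (μ + κ/2) * h (1+t) := by
      intro t ht
      have hdt : 0 < ((1 : Matrix (Fin 2) (Fin 2) ℝ) + t • Matrix.vecMulVec ![(1:ℝ),0] ![(1:ℝ),0]).det := by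
        rw [hdet1]; linarith
      rw [hW _ hdt, sv1_eq, sv2_eq _ hdt.le]
      have huu : uu ((1 : Matrix (Fin 2) (Fin 2) ℝ) + t • Matrix.vecMulVec ![(1:ℝ),0] ![(1:ℝ),0]) = t^2 := by
        simp [uu, Xapply, Matrix.one_apply]
      have hvv : vv ((1 : Matrix (Fin 2) (Fin 2) ℝ) + t • Matrix.vecMulVec ![(1:ℝ),0] ![(1:ℝ),0]) = (2+t)^2 := by
        simp [vv, Xapply, Matrix.one_apply]; ring
      rw [huu, hvv, Real.sqrt_sq (by linarith : (0:ℝ) ≤ 2+t)]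
      rcases le_or_gt 0 t with hpos | hneg
      · rw [Real.sqrt_sq hpos]
        have e1 : (2+t+t)/2 / ((2+t-t)/2) = 1 + t := by norm_num; ring
        have e2 : (2+t+t)/2 * ((2+t-t)/2) = 1 + t := by ring
        rw [e1, e2]; ring
      · have hsq : Real.sqrt (t^2) = -t := by
          rw [Real.sqrt_sq_eq_abs, abs_of_neg hneg]
        rw [hsq]
        have h1t : (0:ℝ) < 1 + t := by linarith
        have e1 : (2+t+ -t)/2 / ((2+t- -t)/2) = 1/(1+t) := by
          rw [show (2+t+ -t)/2 = (1:ℝ) by ring, show (2+t- -t)/2 = 1+t by ring]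
        have e2 : (2+t+ -t)/2 * ((2+t- -t)/2) = 1 + t := by ring
        rw [e1, e2, ← hsymm (1+t) h1t]; ring
    constructor
    · exact convex_Ioi 0
    · intro x hx y hy l l' hl hl' hll
      simp only [smul_eq_mul]
      have hx0 : (0:ℝ) < x := hx
      have hy0 : (0:ℝ) < y := hy
      have hx' : (x - 1 : ℝ) ∈ {t : ℝ | 0 <
          ((1 : Matrix (Fin 2) (Fin 2) ℝ) + t • Matrix.vecMulVec ![(1:ℝ),0] ![(1:ℝ),0]).det} := by
        simp only [mem_setOf_eq, hdet1]; linarith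
      have hy' : (y - 1 : ℝ) ∈ {t : ℝ | 0 <
          ((1 : Matrix (Fin 2) (Fin 2) ℝ) + t • Matrix.vecMulVec ![(1:ℝ),0] ![(1:ℝ),0]).det} := by
        simp only [mem_setOf_eq, hdet1]; linarith
      have hc := key.2 hx' hy' hl hl' hll
      simp only [smul_eq_mul] at hc
      have ecomb : l*(x-1)+l'*(y-1) = l*x+l'*y-1 := by linear_combination (-1 : ℝ) * hll
      rw [ecomb] at hc
      have hσ0 : 0 < l*x+l'*y := comb_pos _ _ _ _ hx0 hy0 hl hl' hll
      rw [hWval _ (by linarith : (-1:ℝ) < l*x+l'*y-1),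
        hWval _ (by linarith : (-1:ℝ) < x-1),
        hWval _ (by linarith : (-1:ℝ) < y-1)] at hc
      have e1 : (1:ℝ) + (l*x+l'*y-1) = l*x+l'*y := by ring
      have e2 : (1:ℝ) + (x-1) = x := by ring
      have e3 : (1:ℝ) + (y-1) = y := by ring
      rw [e1, e2, e3] at hc
      have hpos : (0:ℝ) < μ + κ/2 := by linarith
      nlinarith [hc]
  · intro hconv
    exact reverse_dir μ κ hμ hκ h hconv hsymm W hW
end

section
/- Let h, f ∈ C²((0,∞);ℝ) and define σ̂ : (0,∞)² → ℝ² by σ̂(λ₁,λ₂) = ( h'(λ₁/λ₂)/λ₂² + f'(λ₁λ₂) , −h'(λ₁/λ₂)/λ₂² + f'(λ₁λ₂) ). Then the Jacobian determinant of σ̂ at every (λ₁,λ₂) ∈ (0,∞)² equals det(Dσ̂)(λ₁,λ₂) = (4·f''(λ₁λ₂)/λ₂²)·( (λ₁/λ₂)·h''(λ₁/λ₂) + h'(λ₁/λ₂) ). -/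
open Real Set

/-- First principal Cauchy stress `σ̂₁(λ₁,λ₂) = h'(λ₁/λ₂)/λ₂² + f'(λ₁λ₂)`. -/
noncomputable def sigma1 (h f : ℝ → ℝ) (l1 l2 : ℝ) : ℝ :=
  deriv h (l1 / l2) / l2 ^ 2 + deriv f (l1 * l2)

/-- Second principal Cauchy stress `σ̂₂(λ₁,λ₂) = −h'(λ₁/λ₂)/λ₂² + f'(λ₁λ₂)`. -/
noncomputable def sigma2 (h f : ℝ → ℝ) (l1 l2 : ℝ) : ℝ :=
  -(deriv h (l1 / l2) / l2 ^ 2) + deriv f (l1 * l2)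

/-- The Jacobian determinant of the principal Cauchy stress map
`σ̂ = (σ̂₁, σ̂₂)` equals `(4 f''(λ₁λ₂)/λ₂²) ((λ₁/λ₂) h''(λ₁/λ₂) + h'(λ₁/λ₂))`
at every point of `(0,∞)²`. -/
theorem cauchy_stress_jacobian_det_formula
    (h f : ℝ → ℝ)
    (hh : ContDiffOn ℝ 2 h (Set.Ioi 0))
    (hf : ContDiffOn ℝ 2 f (Set.Ioi 0)) :
    ∀ l1 l2 : ℝ, 0 < l1 → 0 < l2 →
      deriv (fun s => sigma1 h f s l2) l1 * deriv (fun s => sigma2 h f l1 s) l2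
        - deriv (fun s => sigma1 h f l1 s) l2 * deriv (fun s => sigma2 h f s l2) l1
      = 4 * deriv (deriv f) (l1 * l2) / l2 ^ 2
          * (l1 / l2 * deriv (deriv h) (l1 / l2) + deriv h (l1 / l2)) := by
  intro l1 l2 h1 h2
  have hod : ContDiffOn ℝ 1 (deriv h) (Ioi 0) :=
    hh.deriv_of_isOpen isOpen_Ioi (by norm_num)
  have fod : ContDiffOn ℝ 1 (deriv f) (Ioi 0) :=
    hf.deriv_of_isOpen isOpen_Ioi (by norm_num)
  have hd2 : ∀ x : ℝ, 0 < x → HasDerivAt (deriv h) (deriv (deriv h) x) x := fun x hx =>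
    ((hod.differentiableOn one_ne_zero).differentiableAt (isOpen_Ioi.mem_nhds hx)).hasDerivAt
  have fd2 : ∀ x : ℝ, 0 < x → HasDerivAt (deriv f) (deriv (deriv f) x) x := fun x hx =>
    ((fod.differentiableOn one_ne_zero).differentiableAt (isOpen_Ioi.mem_nhds hx)).hasDerivAt
  have hq : 0 < l1 / l2 := div_pos h1 h2
  have hp : 0 < l1 * l2 := mul_pos h1 h2
  have hl2 : l2 ≠ 0 := h2.ne'
  -- partial of σ1 in first variable
  have A : HasDerivAt (fun s => sigma1 h f s l2)
      (deriv (deriv h) (l1 / l2) * (1 / l2) / l2 ^ 2 + deriv (deriv f) (l1 * l2) * l2) l1 := by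
    have t1 : HasDerivAt (fun s : ℝ => deriv h (s / l2))
        (deriv (deriv h) (l1 / l2) * (1 / l2)) l1 := by
      have := (hd2 (l1 / l2) hq).comp l1 ((hasDerivAt_id l1).div_const l2)
      simpa [Function.comp_def] using this
    have t2 : HasDerivAt (fun s : ℝ => deriv f (s * l2))
        (deriv (deriv f) (l1 * l2) * l2) l1 := by
      have := (fd2 (l1 * l2) hp).comp l1 ((hasDerivAt_id l1).mul_const l2)
      simpa [Function.comp_def] using this
    exact (t1.div_const (l2 ^ 2)).add t2
  -- partial of σ2 in first variable
  have D : HasDerivAt (fun s => sigma2 h f s l2)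
      (-(deriv (deriv h) (l1 / l2) * (1 / l2) / l2 ^ 2) + deriv (deriv f) (l1 * l2) * l2) l1 := by
    have t1 : HasDerivAt (fun s : ℝ => deriv h (s / l2))
        (deriv (deriv h) (l1 / l2) * (1 / l2)) l1 := by
      have := (hd2 (l1 / l2) hq).comp l1 ((hasDerivAt_id l1).div_const l2)
      simpa [Function.comp_def] using this
    have t2 : HasDerivAt (fun s : ℝ => deriv f (s * l2))
        (deriv (deriv f) (l1 * l2) * l2) l1 := by
      have := (fd2 (l1 * l2) hp).comp l1 ((hasDerivAt_id l1).mul_const l2)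
      simpa [Function.comp_def] using this
    exact ((t1.div_const (l2 ^ 2)).neg).add t2
  -- inner derivative in second variable
  have inner : HasDerivAt (fun s : ℝ => deriv h (l1 / s))
      (deriv (deriv h) (l1 / l2) * (-(l1 / l2 ^ 2))) l2 := by
    have hdiv : HasDerivAt (fun s : ℝ => l1 / s) (-(l1 / l2 ^ 2)) l2 := by
      have := (hasDerivAt_inv hl2).const_mul l1
      simpa [div_eq_mul_inv, mul_comm, mul_div_assoc] using this
    exact (hd2 (l1 / l2) hq).comp l2 hdiv
  have hpow : HasDerivAt (fun s : ℝ => s ^ 2) (2 * l2) l2 := by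
    simpa using hasDerivAt_pow 2 l2
  have quot : HasDerivAt (fun s : ℝ => deriv h (l1 / s) / s ^ 2)
      ((deriv (deriv h) (l1 / l2) * (-(l1 / l2 ^ 2)) * l2 ^ 2
        - deriv h (l1 / l2) * (2 * l2)) / (l2 ^ 2) ^ 2) l2 :=
    inner.div hpow (by positivity)
  have t2' : HasDerivAt (fun s : ℝ => deriv f (l1 * s))
      (deriv (deriv f) (l1 * l2) * l1) l2 := by
    have := (fd2 (l1 * l2) hp).comp l2 ((hasDerivAt_id l2).const_mul l1)
    simpa [Function.comp_def] using this
  have C : HasDerivAt (fun s => sigma1 h f l1 s)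
      ((deriv (deriv h) (l1 / l2) * (-(l1 / l2 ^ 2)) * l2 ^ 2
        - deriv h (l1 / l2) * (2 * l2)) / (l2 ^ 2) ^ 2
        + deriv (deriv f) (l1 * l2) * l1) l2 := quot.add t2'
  have B : HasDerivAt (fun s => sigma2 h f l1 s)
      (-((deriv (deriv h) (l1 / l2) * (-(l1 / l2 ^ 2)) * l2 ^ 2
        - deriv h (l1 / l2) * (2 * l2)) / (l2 ^ 2) ^ 2)
        + deriv (deriv f) (l1 * l2) * l1) l2 := quot.neg.add t2'
  rw [A.deriv, B.deriv, C.deriv, D.deriv]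
  field_simp
  ring
end

section
/- Let h, f ∈ C²((0,∞);ℝ) with h(t) = h(1/t) for all t > 0, and define g : (0,∞)² → ℝ by g(x,y) = h(x/y) + f(x·y). Then ∂²g/∂x²(x,y) ≥ 0 and ∂²g/∂y²(x,y) ≥ 0 for all x,y > 0 if and only if t²·h''(t) + z²·f''(z) ≥ 0 for all t,z > 0. -/
open Real Set

noncomputable def gx (g : ℝ → ℝ → ℝ) (x y : ℝ) : ℝ := deriv (fun s => g s y) x
noncomputable def gy (g : ℝ → ℝ → ℝ) (x y : ℝ) : ℝ := deriv (fun s => g x s) y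
noncomputable def gxx (g : ℝ → ℝ → ℝ) (x y : ℝ) : ℝ := deriv (fun s => gx g s y) x
noncomputable def gyy (g : ℝ → ℝ → ℝ) (x y : ℝ) : ℝ := deriv (fun s => gy g x s) y

lemma aux1 {h : ℝ → ℝ} (hh : ContDiffOn ℝ 2 h (Set.Ioi 0)) {t : ℝ} (ht : 0 < t) :
    HasDerivAt h (deriv h t) t :=
  ((hh.differentiableOn (by norm_num)).differentiableAt (isOpen_Ioi.mem_nhds ht)).hasDerivAt

lemma aux2 {h : ℝ → ℝ} (hh : ContDiffOn ℝ 2 h (Set.Ioi 0)) {t : ℝ} (ht : 0 < t) :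
    HasDerivAt (deriv h) (deriv (deriv h) t) t :=
  (((hh.deriv_of_isOpen (m := 1) isOpen_Ioi (by norm_num)).differentiableOn (by norm_num)).differentiableAt
    (isOpen_Ioi.mem_nhds ht)).hasDerivAt

section
variable {h f : ℝ → ℝ} (hh : ContDiffOn ℝ 2 h (Set.Ioi 0)) (hf : ContDiffOn ℝ 2 f (Set.Ioi 0))
  {g : ℝ → ℝ → ℝ} (hg : ∀ x y : ℝ, 0 < x → 0 < y → g x y = h (x / y) + f (x * y))

include hh hf hg in
lemma gx_eq {x y : ℝ} (hx : 0 < x) (hy : 0 < y) :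
    gx g x y = deriv h (x / y) * (1 / y) + deriv f (x * y) * y := by
  have hev : (fun s => g s y) =ᶠ[nhds x] (fun s => h (s / y) + f (s * y)) := by
    filter_upwards [isOpen_Ioi.mem_nhds hx] with s hs using hg s y hs hy
  have h1 : HasDerivAt (fun s : ℝ => s / y) (1 / y) x := by
    simpa using (hasDerivAt_id x).div_const y
  have h2 : HasDerivAt (fun s : ℝ => s * y) y x := by
    simpa using (hasDerivAt_id x).mul_const y
  have hd : HasDerivAt (fun s => h (s / y) + f (s * y))
      (deriv h (x / y) * (1 / y) + deriv f (x * y) * y) x :=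
    ((aux1 hh (div_pos hx hy)).comp x h1).add ((aux1 hf (mul_pos hx hy)).comp x h2)
  rw [gx, hev.deriv_eq, hd.deriv]

include hh hf hg in
lemma gxx_eq {x y : ℝ} (hx : 0 < x) (hy : 0 < y) :
    gxx g x y = deriv (deriv h) (x / y) * (1 / y) * (1 / y)
      + deriv (deriv f) (x * y) * y * y := by
  have hev : (fun s => gx g s y) =ᶠ[nhds x]
      (fun s => deriv h (s / y) * (1 / y) + deriv f (s * y) * y) := by
    filter_upwards [isOpen_Ioi.mem_nhds hx] with s hs using gx_eq hh hf hg hs hy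
  have h1 : HasDerivAt (fun s : ℝ => s / y) (1 / y) x := by
    simpa using (hasDerivAt_id x).div_const y
  have h2 : HasDerivAt (fun s : ℝ => s * y) y x := by
    simpa using (hasDerivAt_id x).mul_const y
  have hd : HasDerivAt (fun s => deriv h (s / y) * (1 / y) + deriv f (s * y) * y)
      (deriv (deriv h) (x / y) * (1 / y) * (1 / y) + deriv (deriv f) (x * y) * y * y) x :=
    (((aux2 hh (div_pos hx hy)).comp x h1).mul_const (1 / y)).add
      (by have := ((aux2 hf (mul_pos hx hy)).comp x h2).mul_const y; exact this)
  rw [gxx, hev.deriv_eq, hd.deriv]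

include hh hf hg in
lemma gy_eq {x y : ℝ} (hx : 0 < x) (hy : 0 < y) :
    gy g x y = deriv h (x / y) * (x * (-(y ^ 2)⁻¹)) + deriv f (x * y) * x := by
  have hev : (fun s => g x s) =ᶠ[nhds y] (fun s => h (x / s) + f (x * s)) := by
    filter_upwards [isOpen_Ioi.mem_nhds hy] with s hs using hg x s hx hs
  have h1 : HasDerivAt (fun s : ℝ => x / s) (x * (-(y ^ 2)⁻¹)) y := by
    simpa [div_eq_mul_inv] using (hasDerivAt_inv hy.ne').const_mul x
  have h2 : HasDerivAt (fun s : ℝ => x * s) x y := by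
    simpa using (hasDerivAt_id y).const_mul x
  have hd : HasDerivAt (fun s => h (x / s) + f (x * s))
      (deriv h (x / y) * (x * (-(y ^ 2)⁻¹)) + deriv f (x * y) * x) y :=
    ((aux1 hh (div_pos hx hy)).comp y h1).add ((aux1 hf (mul_pos hx hy)).comp y h2)
  rw [gy, hev.deriv_eq, hd.deriv]

include hh hf hg in
lemma gyy_eq {x y : ℝ} (hx : 0 < x) (hy : 0 < y) :
    gyy g x y = (deriv (deriv h) (x / y) * (x * (-(y ^ 2)⁻¹))) * (x * (-(y ^ 2)⁻¹))
      + deriv h (x / y) * (x * (2 * y / (y ^ 2) ^ 2))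
      + deriv (deriv f) (x * y) * x * x := by
  have hev : (fun s => gy g x s) =ᶠ[nhds y]
      (fun s => deriv h (x / s) * (x * (-(s ^ 2)⁻¹)) + deriv f (x * s) * x) := by
    filter_upwards [isOpen_Ioi.mem_nhds hy] with s hs using gy_eq hh hf hg hx hs
  have h1 : HasDerivAt (fun s : ℝ => x / s) (x * (-(y ^ 2)⁻¹)) y := by
    simpa [div_eq_mul_inv] using (hasDerivAt_inv hy.ne').const_mul x
  have h2 : HasDerivAt (fun s : ℝ => x * s) x y := by
    simpa using (hasDerivAt_id y).const_mul x
  have hB : HasDerivAt (fun s : ℝ => x * (-(s ^ 2)⁻¹)) (x * (2 * y / (y ^ 2) ^ 2)) y := by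
    have := (((hasDerivAt_pow 2 y).inv (pow_ne_zero 2 hy.ne')).neg).const_mul x
    simpa [neg_div] using this
  have hA : HasDerivAt (fun s : ℝ => deriv h (x / s))
      (deriv (deriv h) (x / y) * (x * (-(y ^ 2)⁻¹))) y :=
    (aux2 hh (div_pos hx hy)).comp y h1
  have hC : HasDerivAt (fun s : ℝ => deriv f (x * s) * x)
      (deriv (deriv f) (x * y) * x * x) y :=
    ((aux2 hf (mul_pos hx hy)).comp y h2).mul_const x
  have hd := (hA.mul hB).add hC
  rw [gyy, hev.deriv_eq]
  exact hd.deriv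
end

section
variable {h : ℝ → ℝ} (hh : ContDiffOn ℝ 2 h (Set.Ioi 0))
  (hsymm : ∀ t : ℝ, 0 < t → h t = h (1 / t))

include hh hsymm in
lemma sym1 {t : ℝ} (ht : 0 < t) : deriv h t = deriv h t⁻¹ * (-(t ^ 2)⁻¹) := by
  have hev : h =ᶠ[nhds t] (fun s => h s⁻¹) := by
    filter_upwards [isOpen_Ioi.mem_nhds ht] with s hs
    rw [hsymm s hs, one_div]
  have hd : HasDerivAt (fun s : ℝ => h s⁻¹) (deriv h t⁻¹ * (-(t ^ 2)⁻¹)) t :=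
    (aux1 hh (inv_pos.2 ht)).comp t (hasDerivAt_inv ht.ne')
  rw [hev.deriv_eq, hd.deriv]

include hh hsymm in
lemma sym2 {t : ℝ} (ht : 0 < t) :
    deriv (deriv h) t = (deriv (deriv h) t⁻¹ * (-(t ^ 2)⁻¹)) * (-(t ^ 2)⁻¹)
      + deriv h t⁻¹ * (2 * t / (t ^ 2) ^ 2) := by
  have hev : deriv h =ᶠ[nhds t] (fun s => deriv h s⁻¹ * (-(s ^ 2)⁻¹)) := by
    filter_upwards [isOpen_Ioi.mem_nhds ht] with s hs using sym1 hh hsymm hs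
  have hA : HasDerivAt (fun s : ℝ => deriv h s⁻¹)
      (deriv (deriv h) t⁻¹ * (-(t ^ 2)⁻¹)) t :=
    (aux2 hh (inv_pos.2 ht)).comp t (hasDerivAt_inv ht.ne')
  have hB : HasDerivAt (fun s : ℝ => -(s ^ 2)⁻¹) (2 * t / (t ^ 2) ^ 2) t := by
    have := ((hasDerivAt_pow 2 t).inv (pow_ne_zero 2 ht.ne')).neg
    refine this.congr_deriv ?_
    norm_num [neg_div]
  have hd := hA.mul hB
  rw [hev.deriv_eq]
  exact hd.deriv

include hh hsymm in
lemma symkey {t : ℝ} (ht : 0 < t) :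
    (t⁻¹) ^ 2 * deriv (deriv h) t⁻¹ =
      t ^ 2 * deriv (deriv h) t + 2 * t * deriv h t := by
  rw [sym2 hh hsymm ht, sym1 hh hsymm ht]
  field_simp
  ring
end

/-- **Transformation of the separate-convexity (TE) condition.** For
`g(x,y) = h(x/y) + f(xy)` with `h(t) = h(1/t)`, the conditions
`g_xx ≥ 0` and `g_yy ≥ 0` on the positive quadrant are equivalent to
`t² h''(t) + z² f''(z) ≥ 0` for all `t, z > 0`. -/
theorem separate_convexity_iff
    (h f : ℝ → ℝ)
    (hh : ContDiffOn ℝ 2 h (Set.Ioi 0))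
    (hf : ContDiffOn ℝ 2 f (Set.Ioi 0))
    (hsymm : ∀ t : ℝ, 0 < t → h t = h (1 / t))
    (g : ℝ → ℝ → ℝ)
    (hg : ∀ x y : ℝ, 0 < x → 0 < y → g x y = h (x / y) + f (x * y)) :
    (∀ x y : ℝ, 0 < x → 0 < y → 0 ≤ gxx g x y ∧ 0 ≤ gyy g x y) ↔
    (∀ t z : ℝ, 0 < t → 0 < z →
      0 ≤ t ^ 2 * deriv (deriv h) t + z ^ 2 * deriv (deriv f) z) := by
  constructor
  · intro H t z ht hz
    set x := Real.sqrt (t * z) with hxdef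
    set y := Real.sqrt (z / t) with hydef
    have hx : 0 < x := Real.sqrt_pos.2 (mul_pos ht hz)
    have hy : 0 < y := Real.sqrt_pos.2 (div_pos hz ht)
    have hxy1 : x / y = t := by
      rw [hxdef, hydef, ← Real.sqrt_div (mul_pos ht hz).le]
      have e : t * z / (z / t) = t ^ 2 := by
        field_simp
      rw [e, Real.sqrt_sq ht.le]
    have hxy2 : x * y = z := by
      rw [hxdef, hydef, ← Real.sqrt_mul (mul_pos ht hz).le]
      have e : t * z * (z / t) = z ^ 2 := by
        field_simp
      rw [e, Real.sqrt_sq hz.le]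
    have key : t ^ 2 * deriv (deriv h) t + z ^ 2 * deriv (deriv f) z
        = x ^ 2 * gxx g x y := by
      rw [gxx_eq hh hf hg hx hy, ← hxy1, ← hxy2]
      field_simp
    rw [key]
    exact mul_nonneg (sq_nonneg x) (H x y hx hy).1
  · intro C x y hx hy
    constructor
    · have e : gxx g x y = ((x / y) ^ 2 * deriv (deriv h) (x / y)
          + (x * y) ^ 2 * deriv (deriv f) (x * y)) / x ^ 2 := by
        rw [gxx_eq hh hf hg hx hy]
        field_simp
      rw [e]
      exact div_nonneg (C (x / y) (x * y) (div_pos hx hy) (mul_pos hx hy)) (sq_nonneg x)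
    · have k := symkey hh hsymm (div_pos hx hy)
      rw [inv_div] at k
      have e : gyy g x y = ((y / x) ^ 2 * deriv (deriv h) (y / x)
          + (x * y) ^ 2 * deriv (deriv f) (x * y)) / y ^ 2 := by
        rw [gyy_eq hh hf hg hx hy, k]
        field_simp
      rw [e]
      exact div_nonneg (C (y / x) (x * y) (div_pos hy hx) (mul_pos hx hy)) (sq_nonneg y)
end

section
/- Let h, f ∈ C²((0,∞);ℝ) with h(t) = h(1/t) for all t > 0, and define g : (0,∞)² → ℝ by g(x,y) = h(x/y) + f(x·y). Then (x·∂g/∂x(x,y) − y·∂g/∂y(x,y))/(x − y) ≥ 0 for all x,y > 0 with x ≠ y if and only if h'(t) ≥ 0 for all t ≥ 1. -/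
open Real Set

/-- **Transformation of the Baker–Ericksen inequality.** For
`g(x,y) = h(x/y) + f(xy)` with `h(t) = h(1/t)`, the Baker–Ericksen inequalities
`(x g_x − y g_y)/(x − y) ≥ 0` for `x ≠ y` on the positive quadrant are equivalent
to `h'(t) ≥ 0` for all `t ≥ 1`. -/
theorem baker_ericksen_iff
    (h f : ℝ → ℝ)
    (hh : ContDiffOn ℝ 2 h (Set.Ioi 0))
    (hf : ContDiffOn ℝ 2 f (Set.Ioi 0))
    (hsymm : ∀ t : ℝ, 0 < t → h t = h (1 / t))
    (g : ℝ → ℝ → ℝ)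
    (hg : ∀ x y : ℝ, 0 < x → 0 < y → g x y = h (x / y) + f (x * y)) :
    (∀ x y : ℝ, 0 < x → 0 < y → x ≠ y →
        0 ≤ (x * gx g x y - y * gy g x y) / (x - y)) ↔
    (∀ t : ℝ, 1 ≤ t → 0 ≤ deriv h t) := by
  have hdh : ∀ t : ℝ, 0 < t → DifferentiableAt ℝ h t := fun t ht =>
    (hh.contDiffAt (isOpen_Ioi.mem_nhds ht)).differentiableAt (by norm_num)
  have hdf : ∀ t : ℝ, 0 < t → DifferentiableAt ℝ f t := fun t ht =>
    (hf.contDiffAt (isOpen_Ioi.mem_nhds ht)).differentiableAt (by norm_num)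
  -- derivative consequence of the symmetry
  have hsym' : ∀ t : ℝ, 0 < t → deriv h t = -deriv h (1 / t) / t ^ 2 := by
    intro t ht
    have h1t : (0:ℝ) < 1 / t := by positivity
    have hev : (fun s : ℝ => h (1 / s)) =ᶠ[nhds t] h := by
      filter_upwards [isOpen_Ioi.mem_nhds ht] with s hs
      exact (hsymm s hs).symm
    have hinner : HasDerivAt (fun s : ℝ => 1 / s) (-(1 / t ^ 2)) t := by
      simpa [one_div] using hasDerivAt_inv (ne_of_gt ht)
    have hcomp := ((hdh _ h1t).hasDerivAt.comp t hinner).congr_of_eventuallyEq hev.symm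
    have hdt := hcomp.deriv
    rw [hdt]; ring
  -- key formula
  have key : ∀ x y : ℝ, 0 < x → 0 < y →
      x * gx g x y - y * gy g x y = 2 * (x / y) * deriv h (x / y) := by
    intro x y hx hy
    have hxy : (0:ℝ) < x / y := by positivity
    have hxyp : (0:ℝ) < x * y := by positivity
    have h1 : HasDerivAt (fun s => h (s / y)) (deriv h (x / y) * (1 / y)) x :=
      (hdh _ hxy).hasDerivAt.comp x ((hasDerivAt_id x).div_const y)
    have h2 : HasDerivAt (fun s => f (s * y)) (deriv f (x * y) * y) x := by
      simpa [Function.comp_def] using (hdf _ hxyp).hasDerivAt.comp x ((hasDerivAt_id x).mul_const y)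
    have hevx : (fun s : ℝ => g s y) =ᶠ[nhds x] fun s => h (s / y) + f (s * y) := by
      filter_upwards [isOpen_Ioi.mem_nhds hx] with s hs
      exact hg s y hs hy
    have hgx : gx g x y = deriv h (x / y) * (1 / y) + deriv f (x * y) * y := by
      have := ((h1.add h2).congr_of_eventuallyEq hevx).deriv
      simpa [gx] using this
    have hi : HasDerivAt (fun s : ℝ => x / s) (x * -(y ^ 2)⁻¹) y := by
      simpa [div_eq_mul_inv] using (hasDerivAt_inv (ne_of_gt hy)).const_mul x
    have h3 : HasDerivAt (fun s => h (x / s)) (deriv h (x / y) * (x * -(y ^ 2)⁻¹)) y :=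
      (hdh _ hxy).hasDerivAt.comp y hi
    have h4 : HasDerivAt (fun s => f (x * s)) (deriv f (x * y) * x) y := by
      simpa [Function.comp_def] using (hdf _ hxyp).hasDerivAt.comp y ((hasDerivAt_id y).const_mul x)
    have hevy : (fun s : ℝ => g x s) =ᶠ[nhds y] fun s => h (x / s) + f (x * s) := by
      filter_upwards [isOpen_Ioi.mem_nhds hy] with s hs
      exact hg x s hx hs
    have hgy : gy g x y = deriv h (x / y) * (x * -(y ^ 2)⁻¹) + deriv f (x * y) * x := by
      have := ((h3.add h4).congr_of_eventuallyEq hevy).deriv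
      simpa [gy] using this
    rw [hgx, hgy]
    field_simp
    ring
  constructor
  · intro hBE t ht
    rcases eq_or_lt_of_le ht with rfl | ht1
    · have := hsym' 1 one_pos
      simp at this
      linarith
    · have ht0 : (0:ℝ) < t := lt_trans one_pos ht1
      have hbe := hBE t 1 ht0 one_pos (ne_of_gt ht1)
      have hk := key t 1 ht0 one_pos
      simp only [div_one, one_mul] at hk hbe
      rw [hk] at hbe
      have hden : (0:ℝ) < t - 1 := sub_pos.mpr ht1
      have hnum : 0 ≤ 2 * t * deriv h t := by
        have := mul_nonneg hden.le hbe
        rwa [mul_div_cancel₀ _ (ne_of_gt hden)] at this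
      nlinarith
  · intro hh' x y hx hy hne
    have hk := key x y hx hy
    rw [hk]
    have hxy : (0:ℝ) < x / y := by positivity
    rcases lt_or_gt_of_ne hne with hlt | hgt
    · -- x < y : x/y < 1
      have ht1 : x / y < 1 := (div_lt_one hy).mpr hlt
      have h1t : 1 ≤ 1 / (x / y) := by
        rw [le_div_iff₀ hxy]; linarith
      have hd : deriv h (x / y) ≤ 0 := by
        rw [hsym' _ hxy]
        have := hh' _ h1t
        have hsq : (0:ℝ) < (x / y) ^ 2 := by positivity
        exact div_nonpos_of_nonpos_of_nonneg (by linarith) hsq.le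
      have hnum : 2 * (x / y) * deriv h (x / y) ≤ 0 :=
        mul_nonpos_of_nonneg_of_nonpos (by positivity) hd
      exact div_nonneg_iff.mpr (Or.inr ⟨hnum, by linarith⟩)
    · -- y < x : 1 < x/y
      have ht1 : 1 < x / y := (one_lt_div hy).mpr hgt
      have hd : 0 ≤ deriv h (x / y) := hh' _ ht1.le
      exact div_nonneg (by positivity) (by linarith)
end

section
/- Let h, f ∈ C²((0,∞);ℝ) with h(t) = h(1/t) for all t > 0, and define g : (0,∞)² → ℝ by g(x,y) = h(x/y) + f(x·y). Then the two conditions ∂²g/∂x²(x,x) − ∂²g/∂x∂y(x,x) + (1/x)·∂g/∂x(x,x) ≥ 0 and ∂²g/∂y²(x,x) − ∂²g/∂x∂y(x,x) + (1/x)·∂g/∂y(x,x) ≥ 0 for all x > 0 are each equivalent to h''(1) ≥ 0; in particular they are implied by the condition that h'(t) ≥ 0 for all t ≥ 1. -/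
open Real Set Filter Topology

noncomputable def gxy (g : ℝ → ℝ → ℝ) (x y : ℝ) : ℝ := deriv (fun s => gx g x s) y

private lemma hd_comp_div {φ : ℝ → ℝ} {φ' : ℝ} (x y : ℝ) (hφ : HasDerivAt φ φ' (x / y)) :
    HasDerivAt (fun s => φ (s / y)) (φ' / y) x := by
  simpa [mul_one_div, div_eq_mul_inv, Function.comp_def] using hφ.comp x ((hasDerivAt_id x).div_const y)

private lemma hd_comp_mul {φ : ℝ → ℝ} {φ' : ℝ} (x y : ℝ) (hφ : HasDerivAt φ φ' (x * y)) :
    HasDerivAt (fun s => φ (s * y)) (φ' * y) x := by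
  simpa [Function.comp_def] using hφ.comp x ((hasDerivAt_id x).mul_const y)

private lemma hd_comp_constdiv {φ : ℝ → ℝ} {φ' : ℝ} (x y : ℝ) (hy : y ≠ 0)
    (hφ : HasDerivAt φ φ' (x / y)) :
    HasDerivAt (fun s => φ (x / s)) (φ' * (-x / y ^ 2)) y := by
  have h1 : HasDerivAt (fun s : ℝ => x / s) (-x / y ^ 2) y := by
    have := (hasDerivAt_inv hy).const_mul x
    simpa [div_eq_mul_inv, neg_div, mul_neg, neg_mul] using this
  exact hφ.comp y h1

private lemma hd_comp_constmul {φ : ℝ → ℝ} {φ' : ℝ} (x y : ℝ) (hφ : HasDerivAt φ φ' (x * y)) :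
    HasDerivAt (fun s => φ (x * s)) (φ' * x) y := by
  simpa [Function.comp_def] using hφ.comp y ((hasDerivAt_id y).const_mul x)

/-- **Transformation of the Knowles–Sternberg condition iii).** For
`g(x,y) = h(x/y) + f(xy)` with `h(t) = h(1/t)`, each of the two diagonal conditions
is equivalent to `h''(1) ≥ 0`, and both are implied by `h'(t) ≥ 0` for all `t ≥ 1`. -/
theorem ks_condition_iii_iff
    (h f : ℝ → ℝ)
    (hh : ContDiffOn ℝ 2 h (Set.Ioi 0))
    (hf : ContDiffOn ℝ 2 f (Set.Ioi 0))
    (hsymm : ∀ t : ℝ, 0 < t → h t = h (1 / t))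
    (g : ℝ → ℝ → ℝ)
    (hg : ∀ x y : ℝ, 0 < x → 0 < y → g x y = h (x / y) + f (x * y)) :
    ((∀ x : ℝ, 0 < x → 0 ≤ gxx g x x - gxy g x x + gx g x x / x) ↔
        0 ≤ deriv (deriv h) 1) ∧
    ((∀ x : ℝ, 0 < x → 0 ≤ gyy g x x - gxy g x x + gy g x x / x) ↔
        0 ≤ deriv (deriv h) 1) ∧
    ((∀ t : ℝ, 1 ≤ t → 0 ≤ deriv h t) → 0 ≤ deriv (deriv h) 1) := by
  have hh1 : ContDiffOn ℝ 1 (deriv h) (Set.Ioi 0) :=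
    hh.deriv_of_isOpen isOpen_Ioi (by norm_num)
  have hf1 : ContDiffOn ℝ 1 (deriv f) (Set.Ioi 0) :=
    hf.deriv_of_isOpen isOpen_Ioi (by norm_num)
  have Hd : ∀ t : ℝ, 0 < t → HasDerivAt h (deriv h t) t := fun t ht =>
    ((hh.contDiffAt (isOpen_Ioi.mem_nhds ht)).differentiableAt (by norm_num)).hasDerivAt
  have Fd : ∀ t : ℝ, 0 < t → HasDerivAt f (deriv f t) t := fun t ht =>
    ((hf.contDiffAt (isOpen_Ioi.mem_nhds ht)).differentiableAt (by norm_num)).hasDerivAt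
  have Hd2 : ∀ t : ℝ, 0 < t → HasDerivAt (deriv h) (deriv (deriv h) t) t := fun t ht =>
    ((hh1.contDiffAt (isOpen_Ioi.mem_nhds ht)).differentiableAt (by norm_num)).hasDerivAt
  have Fd2 : ∀ t : ℝ, 0 < t → HasDerivAt (deriv f) (deriv (deriv f) t) t := fun t ht =>
    ((hf1.contDiffAt (isOpen_Ioi.mem_nhds ht)).differentiableAt (by norm_num)).hasDerivAt
  -- h'(1) = 0
  have hH1 : deriv h 1 = 0 := by
    have hev : h =ᶠ[𝓝 (1 : ℝ)] fun t => h (1 / t) := by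
      filter_upwards [eventually_gt_nhds one_pos] with t ht using hsymm t ht
    have hd0 : HasDerivAt h (deriv h 1) ((1 : ℝ) / 1) := by simpa using Hd 1 one_pos
    have hd : HasDerivAt (fun t : ℝ => h (1 / t)) (deriv h 1 * (-1 / 1 ^ 2)) 1 :=
      hd_comp_constdiv 1 1 one_ne_zero hd0
    have heq := hev.deriv_eq
    rw [hd.deriv] at heq
    norm_num at heq
    linarith
  -- first-order formulas
  have gx_eq : ∀ x y : ℝ, 0 < x → 0 < y →
      gx g x y = deriv h (x / y) / y + deriv f (x * y) * y := by
    intro x y hx hy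
    have hev : (fun s => g s y) =ᶠ[𝓝 x] fun s => h (s / y) + f (s * y) := by
      filter_upwards [eventually_gt_nhds hx] with s hs using hg s y hs hy
    have hd : HasDerivAt (fun s => h (s / y) + f (s * y))
        (deriv h (x / y) / y + deriv f (x * y) * y) x :=
      (hd_comp_div x y (Hd _ (div_pos hx hy))).add (hd_comp_mul x y (Fd _ (mul_pos hx hy)))
    unfold gx
    rw [hev.deriv_eq, hd.deriv]
  have gy_eq : ∀ x y : ℝ, 0 < x → 0 < y →
      gy g x y = deriv h (x / y) * (-x / y ^ 2) + deriv f (x * y) * x := by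
    intro x y hx hy
    have hev : (fun s => g x s) =ᶠ[𝓝 y] fun s => h (x / s) + f (x * s) := by
      filter_upwards [eventually_gt_nhds hy] with s hs using hg x s hx hs
    have hd : HasDerivAt (fun s => h (x / s) + f (x * s))
        (deriv h (x / y) * (-x / y ^ 2) + deriv f (x * y) * x) y :=
      (hd_comp_constdiv x y hy.ne' (Hd _ (div_pos hx hy))).add
        (hd_comp_constmul x y (Fd _ (mul_pos hx hy)))
    unfold gy
    rw [hev.deriv_eq, hd.deriv]
  -- second-order formulas
  have gxx_eq : ∀ x y : ℝ, 0 < x → 0 < y →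
      gxx g x y = deriv (deriv h) (x / y) / y / y + deriv (deriv f) (x * y) * y * y := by
    intro x y hx hy
    have hev : (fun s => gx g s y) =ᶠ[𝓝 x]
        fun s => deriv h (s / y) / y + deriv f (s * y) * y := by
      filter_upwards [eventually_gt_nhds hx] with s hs using gx_eq s y hs hy
    have hd : HasDerivAt (fun s => deriv h (s / y) / y + deriv f (s * y) * y)
        (deriv (deriv h) (x / y) / y / y + deriv (deriv f) (x * y) * y * y) x :=
      ((hd_comp_div x y (Hd2 _ (div_pos hx hy))).div_const y).add
        ((hd_comp_mul x y (Fd2 _ (mul_pos hx hy))).mul_const y)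
    unfold gxx
    rw [hev.deriv_eq, hd.deriv]
  have gxy_eq : ∀ x y : ℝ, 0 < x → 0 < y →
      gxy g x y = (deriv (deriv h) (x / y) * (-x / y ^ 2) * y - deriv h (x / y)) / y ^ 2
        + (deriv (deriv f) (x * y) * x * y + deriv f (x * y)) := by
    intro x y hx hy
    have hev : (fun s => gx g x s) =ᶠ[𝓝 y]
        fun s => deriv h (x / s) / s + deriv f (x * s) * s := by
      filter_upwards [eventually_gt_nhds hy] with s hs using gx_eq x s hx hs
    have d1 : HasDerivAt (fun s => deriv h (x / s) / s)
        ((deriv (deriv h) (x / y) * (-x / y ^ 2) * y - deriv h (x / y) * 1) / y ^ 2) y :=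
      (hd_comp_constdiv x y hy.ne' (Hd2 _ (div_pos hx hy))).div (hasDerivAt_id y) hy.ne'
    have d2 : HasDerivAt (fun s => deriv f (x * s) * s)
        (deriv (deriv f) (x * y) * x * y + deriv f (x * y) * 1) y :=
      (hd_comp_constmul x y (Fd2 _ (mul_pos hx hy))).mul (hasDerivAt_id y)
    unfold gxy
    rw [hev.deriv_eq, (d1.fun_add d2).deriv]
    ring
  have gyy_eq : ∀ x y : ℝ, 0 < x → 0 < y →
      gyy g x y = (deriv (deriv h) (x / y) * (-x / y ^ 2) * -x * y ^ 2
          - deriv h (x / y) * -x * (2 * y)) / (y ^ 2) ^ 2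
        + deriv (deriv f) (x * y) * x * x := by
    intro x y hx hy
    have hev : (fun s => gy g x s) =ᶠ[𝓝 y]
        fun s => deriv h (x / s) * -x / s ^ 2 + deriv f (x * s) * x := by
      filter_upwards [eventually_gt_nhds hy] with s hs
      rw [gy_eq x s hx hs]; ring
    have dnum : HasDerivAt (fun s => deriv h (x / s) * -x)
        (deriv (deriv h) (x / y) * (-x / y ^ 2) * -x) y :=
      (hd_comp_constdiv x y hy.ne' (Hd2 _ (div_pos hx hy))).mul_const (-x)
    have dden : HasDerivAt (fun s : ℝ => s ^ 2) ((2 : ℕ) * y ^ 1) y := hasDerivAt_pow 2 y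
    have d1 : HasDerivAt (fun s => deriv h (x / s) * -x / s ^ 2)
        ((deriv (deriv h) (x / y) * (-x / y ^ 2) * -x * y ^ 2
          - deriv h (x / y) * -x * ((2 : ℕ) * y ^ 1)) / (y ^ 2) ^ 2) y :=
      dnum.div dden (pow_ne_zero 2 hy.ne')
    have d2 : HasDerivAt (fun s => deriv f (x * s) * x)
        (deriv (deriv f) (x * y) * x * x) y :=
      (hd_comp_constmul x y (Fd2 _ (mul_pos hx hy))).mul_const x
    unfold gyy
    rw [hev.deriv_eq, (d1.fun_add d2).deriv]
    push_cast
    ring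
  -- diagonal identities
  have key1 : ∀ x : ℝ, 0 < x →
      gxx g x x - gxy g x x + gx g x x / x = 2 * deriv (deriv h) 1 / x ^ 2 := by
    intro x hx
    have hx0 : x ≠ 0 := hx.ne'
    have hxx : x / x = 1 := div_self hx0
    rw [gxx_eq x x hx hx, gxy_eq x x hx hx, gx_eq x x hx hx, hxx, hH1]
    field_simp
    ring
  have key2 : ∀ x : ℝ, 0 < x →
      gyy g x x - gxy g x x + gy g x x / x = 2 * deriv (deriv h) 1 / x ^ 2 := by
    intro x hx
    have hx0 : x ≠ 0 := hx.ne'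
    have hxx : x / x = 1 := div_self hx0
    rw [gyy_eq x x hx hx, gxy_eq x x hx hx, gy_eq x x hx hx, hxx, hH1]
    field_simp
    ring
  refine ⟨⟨fun hc => ?_, fun hc x hx => ?_⟩, ⟨fun hc => ?_, fun hc x hx => ?_⟩, fun hmono => ?_⟩
  · have := hc 1 one_pos
    rw [key1 1 one_pos] at this
    norm_num at this
    linarith
  · rw [key1 x hx]
    positivity
  · have := hc 1 one_pos
    rw [key2 1 one_pos] at this
    norm_num at this
    linarith
  · rw [key2 x hx]
    positivity
  · -- h' ≥ 0 on [1,∞) and h'(1) = 0 imply h''(1) ≥ 0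
    have hd : HasDerivAt (deriv h) (deriv (deriv h) 1) 1 := Hd2 1 one_pos
    have hslope : Tendsto (slope (deriv h) 1) (𝓝[>] (1 : ℝ)) (𝓝 (deriv (deriv h) 1)) :=
      (hasDerivAt_iff_tendsto_slope.mp hd).mono_left
        (nhdsWithin_mono 1 fun t ht => ne_of_gt ht)
    have hev : ∀ᶠ t in 𝓝[>] (1 : ℝ), 0 ≤ slope (deriv h) 1 t := by
      filter_upwards [self_mem_nhdsWithin] with t ht
      have h1 : (1 : ℝ) < t := ht
      have h2 := hmono t h1.le
      rw [slope_def_field, hH1]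
      exact div_nonneg (by linarith) (by linarith)
    exact ge_of_tendsto hslope hev
end
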